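/- arXiv:2302.02562 — 11 statements merged into one kernel-verified Lean document; each statement's English description precedes it below -/
import Mathlib

section
/- If A ⊆ ℕ has an asymptotic density d(A) = δ, then (log λ/log L)·δ ≤ d̲(α(A)) ≤ d̄(α(A)) ≤ δ, where α(A) denotes the image of A under α. -/
/-- The upper asymptotic density `limsup |A ∩ {0,…,n−1}|/n` of a set of naturals. -/
noncomputable def upperDensity (A : Set ℕ) : ℝ :=
  Filter.atTop.limsup fun n : ℕ => (Nat.card ↥(A ∩ Set.Iio n) : ℝ) / n

/-- The lower asymptotic density `liminf |A ∩ {0,…,n−1}|/n` of a set of naturals. -/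
noncomputable def lowerDensity (A : Set ℕ) : ℝ :=
  Filter.atTop.liminf fun n : ℕ => (Nat.card ↥(A ∩ Set.Iio n) : ℝ) / n

/-!
Since `a` grows by at most `log L` per step, the first passage time `α m` of the level
`m · log L` is strictly increasing with `m ≤ α m`; this gives `|α(A) ∩ [0, n)| ≤ |A ∩ [0, n)|`
and hence the upper bound. Since `a n ≥ n · log λ - Q`, also
`α m ≤ (log L / log λ) · m + O(1)`, so `α(A) ∩ [0, n)` contains the image of
`A ∩ [0, k)` with `k ≈ (log λ / log L) · n`, which gives the lower bound.
-/

open Filter Set Function Topology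

noncomputable def densityRatio (A : Set ℕ) (n : ℕ) : ℝ :=
  (Nat.card ↥(A ∩ Set.Iio n) : ℝ) / n

section Density

variable {A : Set ℕ}

theorem densityRatio_nonneg (A : Set ℕ) (n : ℕ) : 0 ≤ densityRatio A n := by
  unfold densityRatio; positivity

theorem densityRatio_le_one (A : Set ℕ) (n : ℕ) : densityRatio A n ≤ 1 := by
  refine div_le_one_of_le₀ ?_ n.cast_nonneg
  calc (Nat.card ↥(A ∩ Iio n) : ℝ) ≤ Nat.card ↥(Iio n) := by
        exact_mod_cast Nat.card_mono (finite_Iio n) inter_subset_right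
    _ = n := by simp

theorem densityRatio_mul_cast (A : Set ℕ) (n : ℕ) :
    densityRatio A n * n = Nat.card ↥(A ∩ Iio n) := by
  rcases n.eq_zero_or_pos with rfl | hn
  · simp
  · exact div_mul_cancel₀ _ (by positivity)

theorem isBoundedUnder_le_densityRatio (A : Set ℕ) :
    atTop.IsBoundedUnder (· ≤ ·) (densityRatio A) :=
  isBoundedUnder_of ⟨1, densityRatio_le_one A⟩

theorem isBoundedUnder_ge_densityRatio (A : Set ℕ) :
    atTop.IsBoundedUnder (· ≥ ·) (densityRatio A) :=
  isBoundedUnder_of ⟨0, densityRatio_nonneg A⟩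

theorem lowerDensity_le_upperDensity (A : Set ℕ) : lowerDensity A ≤ upperDensity A :=
  liminf_le_limsup (isBoundedUnder_le_densityRatio A) (isBoundedUnder_ge_densityRatio A)

theorem tendsto_densityRatio {δ : ℝ} (hlow : lowerDensity A = δ) (hupp : upperDensity A = δ) :
    Tendsto (densityRatio A) atTop (𝓝 δ) :=
  tendsto_of_liminf_eq_limsup hlow hupp
    (isBoundedUnder_le_densityRatio A) (isBoundedUnder_ge_densityRatio A)

theorem card_image_inter_Iio_le {f : ℕ → ℕ} (hf : ∀ m, m ≤ f m) (n : ℕ) :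
    Nat.card ↥(f '' A ∩ Iio n) ≤ Nat.card ↥(A ∩ Iio n) := by
  have hsub : f '' A ∩ Iio n ⊆ f '' (A ∩ Iio n) := by
    rintro _ ⟨⟨m, hm, rfl⟩, hmn⟩
    exact ⟨m, ⟨hm, lt_of_le_of_lt (hf m) hmn⟩, rfl⟩
  rw [Nat.card_coe_set_eq, Nat.card_coe_set_eq]
  exact (ncard_le_ncard hsub (((finite_Iio n).inter_of_right A).image f)).trans
    (ncard_image_le ((finite_Iio n).inter_of_right A))

theorem card_inter_Iio_le_card_image {f : ℕ → ℕ} (hf : Injective f) {k n : ℕ}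
    (hkn : ∀ m < k, f m < n) :
    Nat.card ↥(A ∩ Iio k) ≤ Nat.card ↥(f '' A ∩ Iio n) := by
  have hsub : f '' (A ∩ Iio k) ⊆ f '' A ∩ Iio n := by
    rintro _ ⟨m, ⟨hm, hmk⟩, rfl⟩
    exact ⟨⟨m, hm, rfl⟩, hkn m hmk⟩
  rw [Nat.card_coe_set_eq, Nat.card_coe_set_eq, ← ncard_image_of_injective _ hf]
  exact ncard_le_ncard hsub ((finite_Iio n).inter_of_right _)

theorem upperDensity_image_le {f : ℕ → ℕ} (hf : ∀ m, m ≤ f m) :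
    upperDensity (f '' A) ≤ upperDensity A := by
  refine limsup_le_limsup (Eventually.of_forall fun n => ?_)
    (isBoundedUnder_ge_densityRatio _).isCoboundedUnder_le (isBoundedUnder_le_densityRatio A)
  exact div_le_div_of_nonneg_right (by exact_mod_cast card_image_inter_Iio_le hf n)
    n.cast_nonneg

/-- An injection with `f m ≤ C m + K` maps `A ∩ [0, ⌊(n - K) / C⌋)` into `[0, n)`. -/
theorem div_le_lowerDensity_image {f : ℕ → ℕ} (hf : Injective f) {C K δ : ℝ} (hC : 0 < C)
    (hfC : ∀ m, (f m : ℝ) ≤ C * m + K) (hA : Tendsto (densityRatio A) atTop (𝓝 δ)) :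
    δ / C ≤ lowerDensity (f '' A) := by
  set k : ℕ → ℕ := fun n => ⌊((n : ℝ) - K) / C⌋₊
  have hk : Tendsto k atTop atTop := by
    refine tendsto_nat_floor_atTop.comp (Tendsto.atTop_div_const hC ?_)
    exact tendsto_atTop_add_const_right _ _ tendsto_natCast_atTop_atTop
  have hkn : ∀ n, ∀ m < k n, f m < n := by
    intro n m hm
    have hm' : (m : ℝ) < ((n : ℝ) - K) / C := Nat.lt_of_lt_floor hm
    have : C * m + K < n := by rw [lt_div_iff₀ hC] at hm'; linarith
    exact_mod_cast (hfC m).trans_lt this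
  set e : ℕ → ℝ := fun n => C⁻¹ - (K / C + 1) / n
  have he : Tendsto e atTop (𝓝 C⁻¹) := by
    simpa using tendsto_const_nhds.sub (tendsto_const_div_atTop_nhds_zero_nat (K / C + 1))
  have hlim : Tendsto (fun n => densityRatio A (k n) * e n) atTop (𝓝 (δ / C)) :=
    (hA.comp hk).mul he
  have hbound : ∀ n ≥ 1, densityRatio A (k n) * e n ≤ densityRatio (f '' A) n := by
    intro n hn
    have hn' : (0 : ℝ) < n := by exact_mod_cast hn
    have hek : e n ≤ k n / n := by
      have : e n = (((n : ℝ) - K) / C - 1) / n := by simp only [e]; field_simp; ring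
      rw [this]
      exact div_le_div_of_nonneg_right (Nat.sub_one_lt_floor _).le hn'.le
    calc densityRatio A (k n) * e n ≤ densityRatio A (k n) * (k n / n) :=
          mul_le_mul_of_nonneg_left hek (densityRatio_nonneg A _)
      _ = Nat.card ↥(A ∩ Iio (k n)) / n := by rw [← mul_div_assoc, densityRatio_mul_cast]
      _ ≤ densityRatio (f '' A) n :=
          div_le_div_of_nonneg_right (by exact_mod_cast card_inter_Iio_le_card_image hf (hkn n))
            hn'.le
  rw [← hlim.liminf_eq]
  exact liminf_le_liminf (eventually_atTop.2 ⟨1, hbound⟩) hlim.isBoundedUnder_ge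
    (isBoundedUnder_le_densityRatio _).isCoboundedUnder_ge

end Density

section FirstPassage

variable {s : ℝ} {a : ℕ → ℝ} {α : ℕ → ℕ}

theorem le_mul_of_step (ha0 : a 0 = 0) (hstep : ∀ n : ℕ, a (n + 1) ≤ a n + s) (n : ℕ) :
    a n ≤ n * s := by
  induction n with
  | zero => simp [ha0]
  | succ k ih => push_cast; linarith [hstep k]

theorem le_of_isLeast (hα : ∀ m : ℕ, IsLeast {n : ℕ | a n ≥ (m : ℝ) * s} (α m)) (hs : 0 < s) (ha0 : a 0 = 0) (hstep : ∀ n : ℕ, a (n + 1) ≤ a n + s)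
    (m : ℕ) : m ≤ α m := by
  have : (m : ℝ) * s ≤ α m * s := (hα m).1.le.trans (le_mul_of_step ha0 hstep _)
  exact_mod_cast le_of_mul_le_mul_right this hs

theorem strictMono_of_isLeast (hα : ∀ m : ℕ, IsLeast {n : ℕ | a n ≥ (m : ℝ) * s} (α m)) (hs : 0 < s) (ha0 : a 0 = 0)
    (hstep : ∀ n : ℕ, a (n + 1) ≤ a n + s) : StrictMono α := by
  refine strictMono_nat_of_lt_succ fun m => ?_
  obtain ⟨n, hn⟩ : ∃ n, α (m + 1) = n + 1 := by
    refine Nat.exists_eq_add_one.2 (Nat.pos_of_ne_zero fun h0 => ?_)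
    have : a 0 ≥ ((m + 1 : ℕ) : ℝ) * s := h0 ▸ (hα (m + 1)).1
    rw [ha0] at this
    push_cast at this
    nlinarith [m.cast_nonneg (α := ℝ)]
  have hmem : a n ≥ (m : ℝ) * s := by
    have : a (n + 1) ≥ ((m + 1 : ℕ) : ℝ) * s := hn ▸ (hα (m + 1)).1
    push_cast at this
    linarith [hstep n]
  rw [hn]
  exact Nat.lt_succ_of_le ((hα m).2 hmem)

theorem cast_le_of_isLeast (hα : ∀ m : ℕ, IsLeast {n : ℕ | a n ≥ (m : ℝ) * s} (α m))
    {t Q : ℝ} (hs : 0 ≤ s) (ht : 0 < t) (hQ : 0 ≤ Q)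
    (hgrow : ∀ n : ℕ, a n ≥ (n : ℝ) * t - Q) (m : ℕ) :
    (α m : ℝ) ≤ s / t * m + (Q / t + 1) := by
  rcases Nat.eq_zero_or_eq_succ_pred (α m) with h0 | hn
  · rw [h0, Nat.cast_zero]; positivity
  set n := (α m).pred
  have hlt : a n < m * s := by
    by_contra! h
    have := (hα m).2 h
    omega
  have : (n : ℝ) ≤ (m * s + Q) / t := by rw [le_div_iff₀ ht]; linarith [hgrow n]
  calc (α m : ℝ) = n + 1 := by rw [hn, Nat.cast_succ]
    _ ≤ (m * s + Q) / t + 1 := by gcongr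
    _ = s / t * m + (Q / t + 1) := by ring

end FirstPassage

/-- Fix real constants `L > 1`, `λ > 1`, `Q > 0` and a sequence `a : ℕ → ℝ` with
`a 0 = 0`, `a (n+1) ≤ a n + log L`, and `a n ≥ n·log λ − Q`. Let `α m` be the least
`n` with `a n ≥ m·log L`. If `A ⊆ ℕ` has asymptotic density `δ`, then
`(log λ/log L)·δ ≤ d̲(α(A)) ≤ d̄(α(A)) ≤ δ`. -/
theorem stmt_1 (L lam Q : ℝ) (hL : 1 < L) (hlam : 1 < lam) (hQ : 0 < Q)
    (a : ℕ → ℝ) (ha0 : a 0 = 0)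
    (hstep : ∀ n : ℕ, a (n + 1) ≤ a n + Real.log L)
    (hgrow : ∀ n : ℕ, a n ≥ (n : ℝ) * Real.log lam - Q)
    (α : ℕ → ℕ)
    (hα : ∀ m : ℕ, IsLeast {n : ℕ | a n ≥ (m : ℝ) * Real.log L} (α m))
    (A : Set ℕ) (δ : ℝ)
    (hlow : lowerDensity A = δ) (hupp : upperDensity A = δ) :
    (Real.log lam / Real.log L) * δ ≤ lowerDensity (α '' A) ∧
      lowerDensity (α '' A) ≤ upperDensity (α '' A) ∧
      upperDensity (α '' A) ≤ δ := by
  have hs := Real.log_pos hL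
  have ht := Real.log_pos hlam
  refine ⟨?_, lowerDensity_le_upperDensity _, ?_⟩
  · have := div_le_lowerDensity_image (strictMono_of_isLeast hα hs ha0 hstep).injective
      (div_pos hs ht) (cast_le_of_isLeast hα hs.le ht hQ.le hgrow)
      (tendsto_densityRatio hlow hupp)
    exact (le_of_eq (by rw [div_div_eq_mul_div]; ring)).trans this
  · exact hupp ▸ upperDensity_image_le (le_of_isLeast hα hs ha0 hstep)
end

section
/- Let G ⊆ ℕ be a set with d̄(G) > 0. Then for every l ∈ ℕ there exists l₁ ≥ l such that d̄(G(l₁)) > 0, where G(l₁) = {n ∈ G : n + l₁ ∈ G}. -/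
/-!
For `m < n`, the progression `m, m + L, …, m + (k - 1) L` meets `G` in at most
`1 + #{(d, i) : 0 < d < k, i < k, m + i L ∈ G(d L)}` points: all its points in `G` are `d L`
beyond the first one. Summing over `m`, and using that a shift of a set changes its counting
function by a bounded amount, gives `k · |G ∩ [0, n)| ≤ n + k ∑_{0<d<k} |G(d L) ∩ [0, n)| + O(1)`.
So if all the `G(d L)` had density zero, `d̄(G) ≤ 1 / k` for every `k`.
-/

open Finset Nat Filter Topology

theorem count_le_count_shift_add (p : ℕ → Prop) [DecidablePred p] (n s : ℕ) :
    count p n ≤ count (fun m => p (m + s)) n + s := by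
  calc count p n ≤ count p (n + s) := count_monotone p (Nat.le_add_right n s)
    _ = count (fun m => p (m + s)) n + count p s := count_add' p n s
    _ ≤ count (fun m => p (m + s)) n + s := Nat.add_le_add_left (count_le p) _

theorem count_shift_le_count_add (p : ℕ → Prop) [DecidablePred p] (n s : ℕ) :
    count (fun m => p (m + s)) n ≤ count p n + s := by
  calc count (fun m => p (m + s)) n ≤ count p (n + s) := by
        rw [count_add']; exact Nat.le_add_right _ _
    _ = count p n + count (fun m => p (n + m)) s := count_add p n s
    _ ≤ count p n + s := Nat.add_le_add_left (count_le _) _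

theorem card_filter_range_le_one_add_sum (p : ℕ → Prop) [DecidablePred p] (k : ℕ) :
    #{i ∈ range k | p i} ≤ 1 + ∑ d ∈ Ico 1 k, #{i ∈ range k | p i ∧ p (i + d)} := by
  by_cases h : ∃ i, i < k ∧ p i
  · set i₀ := Nat.find h
    obtain ⟨hi₀k, hi₀⟩ : i₀ < k ∧ p i₀ := Nat.find_spec h
    have hsub : {i ∈ range k | p i} ⊆ insert i₀ ({d ∈ Ico 1 k | p (i₀ + d)}.image (i₀ + ·)) := by
      intro i hi
      simp only [mem_filter, mem_range] at hi
      simp only [mem_insert, mem_image, mem_filter, mem_Ico]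
      rcases (Nat.find_min' h hi).eq_or_lt with rfl | hlt
      · exact Or.inl rfl
      · refine Or.inr ⟨i - i₀, ⟨⟨by omega, by omega⟩, ?_⟩, by omega⟩
        rw [Nat.add_sub_cancel' hlt.le]
        exact hi.2
    calc #{i ∈ range k | p i} ≤ 1 + #{d ∈ Ico 1 k | p (i₀ + d)} := by
          refine (card_le_card hsub).trans ((card_insert_le _ _).trans ?_)
          rw [add_comm]; exact Nat.add_le_add_left card_image_le 1
      _ ≤ 1 + ∑ d ∈ Ico 1 k, #{i ∈ range k | p i ∧ p (i + d)} := by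
          rw [card_filter]
          gcongr with d
          split_ifs with hd
          · exact card_pos.mpr ⟨i₀, by simp [hi₀k, hi₀, hd]⟩
          · exact Nat.zero_le _
  · simp only [not_exists, not_and] at h
    simp [filter_eq_empty_iff.mpr (fun i hi => h i (mem_range.mp hi))]

theorem sum_count_shift_le (p : ℕ → Prop) [DecidablePred p] (L k n : ℕ) :
    ∑ i ∈ range k, count (fun m => p (m + i * L)) n ≤
      n + ∑ d ∈ Ico 1 k, ∑ i ∈ range k,
        count (fun m => p (m + i * L) ∧ p (m + i * L + d * L)) n := by
  calc ∑ i ∈ range k, count (fun m => p (m + i * L)) n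
      = ∑ m ∈ range n, #{i ∈ range k | p (m + i * L)} := by
        simp only [count_eq_card_filter_range, card_filter]
        exact sum_comm
    _ ≤ ∑ m ∈ range n, (1 + ∑ d ∈ Ico 1 k,
          #{i ∈ range k | p (m + i * L) ∧ p (m + i * L + d * L)}) := by
        gcongr with m
        simpa only [add_mul, add_assoc] using
          card_filter_range_le_one_add_sum (fun i => p (m + i * L)) k
    _ = _ := by
        simp only [sum_add_distrib, count_eq_card_filter_range, card_filter]
        simp only [sum_const, card_range, smul_eq_mul, mul_one]
        congr 1
        rw [sum_comm]
        refine sum_congr rfl fun d _ => sum_comm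

theorem mul_count_le (p : ℕ → Prop) [DecidablePred p] (L k n : ℕ) :
    k * count p n ≤
      n + k * ∑ d ∈ Ico 1 k, count (fun x => p x ∧ p (x + d * L)) n + (k + 1) * k ^ 2 * L := by
  have hshift (q : ℕ → Prop) [DecidablePred q] (i : ℕ) (hi : i ∈ range k) :
      count q n ≤ count (fun m => q (m + i * L)) n + k * L ∧
      count (fun m => q (m + i * L)) n ≤ count q n + k * L := by
    have : i * L ≤ k * L := Nat.mul_le_mul_right L (mem_range.mp hi).le
    exact ⟨(count_le_count_shift_add q n (i * L)).trans (by omega),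
      (count_shift_le_count_add q n (i * L)).trans (by omega)⟩
  calc k * count p n = ∑ i ∈ range k, count p n := by simp
    _ ≤ ∑ i ∈ range k, (count (fun m => p (m + i * L)) n + k * L) :=
        sum_le_sum fun i hi => (hshift p i hi).1
    _ = ∑ i ∈ range k, count (fun m => p (m + i * L)) n + k * (k * L) := by
        simp [sum_add_distrib]
    _ ≤ n + ∑ d ∈ Ico 1 k, ∑ i ∈ range k,
          (count (fun x => p x ∧ p (x + d * L)) n + k * L) + k * (k * L) := by
        gcongr
        refine (sum_count_shift_le p L k n).trans ?_
        gcongr with d _ i hi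
        exact (hshift (fun x => p x ∧ p (x + d * L)) i hi).2
    _ = n + ∑ d ∈ Ico 1 k, (k * count (fun x => p x ∧ p (x + d * L)) n + k * (k * L))
          + k * (k * L) := by
        simp only [sum_add_distrib, sum_const, card_range, smul_eq_mul]
    _ ≤ _ := by
        rw [sum_add_distrib, sum_const, Nat.card_Ico, smul_eq_mul, ← mul_sum]
        have : (k - 1) * (k * (k * L)) ≤ k * (k * (k * L)) :=
          Nat.mul_le_mul_right _ (Nat.sub_le k 1)
        have e : (k + 1) * k ^ 2 * L = k * (k * (k * L)) + k * (k * L) := by ring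
        omega

theorem upperDensity_setOf (p : ℕ → Prop) [DecidablePred p] :
    upperDensity {x | p x} = limsup (fun n : ℕ => (count p n : ℝ) / n) atTop := by
  unfold upperDensity
  congr! with n
  rw [count_eq_card_filter_range, ← Set.ncard_coe_finset, Nat.card_coe_set_eq]
  congr 1
  ext x
  simp [and_comm]

theorem count_div_nonneg (p : ℕ → Prop) [DecidablePred p] (n : ℕ) : 0 ≤ (count p n : ℝ) / n := by
  positivity

theorem count_div_le_one (p : ℕ → Prop) [DecidablePred p] (n : ℕ) : (count p n : ℝ) / n ≤ 1 :=
  div_le_one_of_le₀ (by exact_mod_cast count_le p) n.cast_nonneg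

theorem tendsto_count_div_of_upperDensity_le_zero (p : ℕ → Prop) [DecidablePred p]
    (h : upperDensity {x | p x} ≤ 0) :
    Tendsto (fun n : ℕ => (count p n : ℝ) / n) atTop (𝓝 0) := by
  rw [upperDensity_setOf] at h
  refine tendsto_of_le_liminf_of_limsup_le ?_ h ?_ ?_
  · exact le_liminf_of_le (isBoundedUnder_of ⟨1, count_div_le_one p⟩).isCoboundedUnder_ge
      (Eventually.of_forall (count_div_nonneg p))
  · exact isBoundedUnder_of ⟨1, count_div_le_one p⟩
  · exact isBoundedUnder_of ⟨0, count_div_nonneg p⟩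

theorem upperDensity_le_of_eventually_le_of_tendsto (p : ℕ → Prop) [DecidablePred p]
    {g : ℕ → ℝ} {a : ℝ} (hle : ∀ᶠ n in atTop, (count p n : ℝ) / n ≤ g n)
    (hg : Tendsto g atTop (𝓝 a)) : upperDensity {x | p x} ≤ a := by
  rw [upperDensity_setOf, ← hg.limsup_eq]
  exact limsup_le_limsup hle (isBoundedUnder_of ⟨0, count_div_nonneg p⟩).isCoboundedUnder_le
    hg.isBoundedUnder_le

theorem mul_upperDensity_le_one (p : ℕ → Prop) [DecidablePred p] (L k : ℕ)
    (h : ∀ d ∈ Ico 1 k, upperDensity {x | p x ∧ p (x + d * L)} ≤ 0) :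
    k * upperDensity {x | p x} ≤ 1 := by
  rcases k.eq_zero_or_pos with rfl | hk
  · simp
  obtain ⟨C, hC⟩ : ∃ C : ℝ, ∀ n, (k : ℝ) * count p n ≤
      n + k * ∑ d ∈ Ico 1 k, (count (fun x => p x ∧ p (x + d * L)) n : ℝ) + C :=
    ⟨(k + 1) * k ^ 2 * L, fun n => by exact_mod_cast mul_count_le p L k n⟩
  have hlim : Tendsto (fun n : ℕ => 1 / k + ∑ d ∈ Ico 1 k,
      (count (fun x => p x ∧ p (x + d * L)) n : ℝ) / n + C / k / n) atTop (𝓝 (1 / k)) := by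
    have := ((tendsto_const_nhds (x := (1 / k : ℝ))).add (tendsto_finsetSum (Ico 1 k)
      fun d hd => tendsto_count_div_of_upperDensity_le_zero _ (h d hd))).add
      (tendsto_const_div_atTop_nhds_zero_nat (C / k))
    simpa using this
  have hle : ∀ᶠ n : ℕ in atTop, (count p n : ℝ) / n ≤ 1 / k + ∑ d ∈ Ico 1 k,
      (count (fun x => p x ∧ p (x + d * L)) n : ℝ) / n + C / k / n := by
    filter_upwards [eventually_gt_atTop 0] with n hn
    rw [← sum_div]
    field_simp
    linarith [hC n]
  have := upperDensity_le_of_eventually_le_of_tendsto p hle hlim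
  rwa [le_div_iff₀' (by exact_mod_cast hk)] at this

/-- Let `G ⊆ ℕ` have positive upper density. Then for every `l` there exists `l₁ ≥ l`
such that `{n ∈ G : n + l₁ ∈ G}` has positive upper density. -/
theorem stmt_2 (G : Set ℕ) (hG : 0 < upperDensity G) :
    ∀ l : ℕ, ∃ l₁ : ℕ, l ≤ l₁ ∧ 0 < upperDensity {n ∈ G | n + l₁ ∈ G} := by
  classical
  intro l
  by_contra! hsparse
  obtain ⟨k, hk⟩ := exists_nat_gt (1 / upperDensity G)
  have hkG : 1 < k * upperDensity G := by rwa [div_lt_iff₀ hG] at hk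
  refine hkG.not_ge (mul_upperDensity_le_one (· ∈ G) l k fun d hd => hsparse _ ?_)
  exact Nat.le_mul_of_pos_left l (mem_Ico.mp hd).1
end

section
/- Let q ≥ 2 be an integer and let G ⊆ ℕ satisfy d̄(G) ≥ 1/q. Then d̄(⋃_{i=1}^{100q} G(i)) ≥ 1/(200q²), where G(i) = {n ∈ G : n + i ∈ G}. -/
/-!
Let `m = 100q` and let `U` be the union of the sets `G(i)`, `1 ≤ i ≤ m`. Two elements of `G \ U`
differ by more than `m`, so `G \ U` has upper density at most `1/m`. By subadditivity of the
upper density, `d̄(U) ≥ d̄(G) - 1/m ≥ 1/q - 1/(100q)`, which is well above `1/(200q²)`.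
-/

open Filter Set

lemma card_inter_Iio_le (A : Set ℕ) (n : ℕ) : Nat.card ↥(A ∩ Iio n) ≤ n := by
  simpa using Nat.card_mono (finite_Iio n) inter_subset_right

lemma card_union_inter_Iio_le (A B : Set ℕ) (n : ℕ) :
    Nat.card ↥((A ∪ B) ∩ Iio n) ≤ Nat.card ↥(A ∩ Iio n) + Nat.card ↥(B ∩ Iio n) := by
  simp only [Nat.card_coe_set_eq, union_inter_distrib_right]
  exact ncard_union_le _ _

lemma isBoundedUnder_le_density (A : Set ℕ) :
    IsBoundedUnder (· ≤ ·) atTop fun n : ℕ => (Nat.card ↥(A ∩ Iio n) : ℝ) / n :=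
  isBoundedUnder_of_eventually_le (a := 1) <| Eventually.of_forall fun n =>
    div_le_one_of_le₀ (by exact_mod_cast card_inter_Iio_le A n) n.cast_nonneg

lemma isBoundedUnder_ge_density (A : Set ℕ) :
    IsBoundedUnder (· ≥ ·) atTop fun n : ℕ => (Nat.card ↥(A ∩ Iio n) : ℝ) / n :=
  isBoundedUnder_of_eventually_ge (a := 0) <| Eventually.of_forall fun _ => by positivity

lemma isCoboundedUnder_le_density (A : Set ℕ) :
    IsCoboundedUnder (· ≤ ·) atTop fun n : ℕ => (Nat.card ↥(A ∩ Iio n) : ℝ) / n :=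
  isCoboundedUnder_le_of_le atTop fun _ => by positivity

lemma upperDensity_mono {A B : Set ℕ} (h : A ⊆ B) : upperDensity A ≤ upperDensity B :=
  limsup_le_limsup (Eventually.of_forall fun n => div_le_div_of_nonneg_right (Nat.cast_le.2 <|
      Nat.card_mono ((finite_Iio n).inter_of_right B) (inter_subset_inter_left _ h)) n.cast_nonneg)
    (isCoboundedUnder_le_density A) (isBoundedUnder_le_density B)

lemma upperDensity_union_le (A B : Set ℕ) :
    upperDensity (A ∪ B) ≤ upperDensity A + upperDensity B := by
  calc upperDensity (A ∪ B)
      ≤ limsup ((fun n : ℕ => (Nat.card ↥(A ∩ Iio n) : ℝ) / n) +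
          fun n : ℕ => (Nat.card ↥(B ∩ Iio n) : ℝ) / n) atTop := by
        refine limsup_le_limsup (Eventually.of_forall fun n => ?_)
          (isCoboundedUnder_le_density _)
          (isBoundedUnder_le_add (isBoundedUnder_le_density A) (isBoundedUnder_le_density B))
        rw [Pi.add_apply, ← add_div]
        exact div_le_div_of_nonneg_right (by exact_mod_cast card_union_inter_Iio_le A B n)
          n.cast_nonneg
    _ ≤ upperDensity A + upperDensity B :=
        limsup_add_le (isBoundedUnder_ge_density A) (isBoundedUnder_le_density A)
          (isCoboundedUnder_le_density B) (isBoundedUnder_le_density B)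

lemma card_inter_Iio_le_of_gap {S : Set ℕ} {m : ℕ} (hm : 0 < m)
    (hS : ∀ a ∈ S, ∀ b ∈ S, a < b → a + m ≤ b) (n : ℕ) :
    Nat.card ↥(S ∩ Iio n) ≤ n / m + 1 := by
  have hmono : StrictMonoOn (· / m) (S ∩ Iio n) := fun a ha b hb hab =>
    calc a / m < a / m + 1 := Nat.lt_succ_self _
      _ = (a + m) / m := (Nat.add_div_right a hm).symm
      _ ≤ b / m := Nat.div_le_div_right (hS a ha.1 b hb.1 hab)
  have hmaps : ∀ a ∈ S ∩ Iio n, a / m ∈ Iio (n / m + 1) := fun a ha =>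
    Nat.lt_succ_of_le (Nat.div_le_div_right ha.2.le)
  simpa [Nat.card_coe_set_eq] using ncard_le_ncard_of_injOn _ hmaps hmono.injOn

lemma upperDensity_le_of_gap {S : Set ℕ} {m : ℕ} (hm : 0 < m)
    (hS : ∀ a ∈ S, ∀ b ∈ S, a < b → a + m ≤ b) :
    upperDensity S ≤ 1 / m := by
  have hlim : Tendsto (fun n : ℕ => 1 / (m : ℝ) + 1 / n) atTop (nhds (1 / m)) := by
    simpa using tendsto_one_div_atTop_nhds_zero_nat.const_add (1 / (m : ℝ))
  rw [← hlim.limsup_eq]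
  refine limsup_le_limsup (Eventually.of_forall fun n => ?_) (isCoboundedUnder_le_density S)
    hlim.isBoundedUnder_le
  calc (Nat.card ↥(S ∩ Iio n) : ℝ) / n ≤ ((n / m : ℕ) + 1 : ℝ) / n := by
        gcongr
        exact_mod_cast card_inter_Iio_le_of_gap hm hS n
    _ ≤ (n / m + 1) / n := by gcongr; exact Nat.cast_div_le
    _ ≤ 1 / m + 1 / n := by
        rcases Nat.eq_zero_or_pos n with rfl | hn
        · simp
        · rw [add_div, div_right_comm, div_self (by positivity)]

lemma add_lt_of_mem_diff_biUnion_Icc {G : Set ℕ} {m a b : ℕ}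
    (ha : a ∈ G \ ⋃ i ∈ Finset.Icc 1 m, {n ∈ G | n + i ∈ G})
    (hb : b ∈ G \ ⋃ i ∈ Finset.Icc 1 m, {n ∈ G | n + i ∈ G}) (hab : a < b) :
    a + m < b := by
  by_contra! hba
  refine ha.2 (mem_biUnion (x := b - a) (Finset.mem_Icc.2 (by omega)) ⟨ha.1, ?_⟩)
  simpa [Nat.add_sub_cancel' hab.le] using hb.1

/-- Let `q ≥ 2` be an integer and `G ⊆ ℕ` with `d̄(G) ≥ 1/q`. Then
`d̄(⋃_{i=1}^{100q} G(i)) ≥ 1/(200q²)`, where `G(i) = {n ∈ G : n + i ∈ G}`. -/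
theorem stmt_3 (q : ℕ) (hq : 2 ≤ q) (G : Set ℕ)
    (hG : (1 : ℝ) / q ≤ upperDensity G) :
    (1 : ℝ) / (200 * (q : ℝ) ^ 2) ≤
      upperDensity (⋃ i ∈ Finset.Icc 1 (100 * q), {n ∈ G | n + i ∈ G}) := by
  set U := ⋃ i ∈ Finset.Icc 1 (100 * q), {n ∈ G | n + i ∈ G}
  have hgap : upperDensity (G \ U) ≤ 1 / (100 * q : ℕ) :=
    upperDensity_le_of_gap (by omega) fun a ha b hb hab =>
      (add_lt_of_mem_diff_biUnion_Icc ha hb hab).le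
  have hsplit : upperDensity G ≤ upperDensity U + upperDensity (G \ U) :=
    (upperDensity_mono (by simp)).trans (upperDensity_union_le U (G \ U))
  have hq' : (2 : ℝ) ≤ q := by exact_mod_cast hq
  have harith : (1 : ℝ) / (200 * q ^ 2) ≤ 1 / q - 1 / (100 * q) := by
    rw [div_sub_div _ _ (by positivity) (by positivity),
      div_le_div_iff₀ (by positivity) (by positivity)]
    nlinarith
  push_cast at hgap
  linarith
end

section
/- Let G ⊆ ℕ be a set with d̄(G) > 0. Then there exists a strictly increasing sequence of positive integers l₁ < l₂ < l₃ < … such that for every s ≥ 1 one has d̄(G(l₁,…,l_s)) > 0, where G(l₁,…,l_s) = {n ∈ G : n + l_j ∈ G for every 1 ≤ j ≤ s}. -/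
/-!
If every set `{n ∈ A | n + d t ∈ A}` with `0 < d < k` had density zero, then the `k` translates
`A - i t` (`i < k`) of `A` would be almost disjoint inside `[0, n)`, so that
`k |A ∩ [0, n)| ≤ n + o(n)` by the Bonferroni inequality, i.e. `d̄(A) ≤ 1/k`. Hence a set of
positive upper density `A` has arbitrarily large `l` with `d̄(A ∩ (A - l)) > 0`, and iterating
this step along `G ⊇ G(l₁) ⊇ G(l₁, l₂) ⊇ …` produces the sequence.
-/

open Filter Finset Nat
open scoped Classical Topology

theorem Finset.sum_card_le_card_biUnion_add_sum_card_inter {α : Type*} [DecidableEq α]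
    (S : ℕ → Finset α) (k : ℕ) :
    ∑ i ∈ range k, #(S i) ≤
      #((range k).biUnion S) + ∑ i ∈ range k, ∑ j ∈ range i, #(S i ∩ S j) := by
  induction k with
  | zero => simp
  | succ k ih =>
    have hunion : (range (k + 1)).biUnion S = (range k).biUnion S ∪ S k := by
      rw [range_add_one, biUnion_insert, union_comm]
    have hinter : #((range k).biUnion S ∩ S k) ≤ ∑ j ∈ range k, #(S k ∩ S j) := by
      rw [biUnion_inter, biUnion_congr rfl fun j _ => inter_comm (S j) (S k)]
      exact card_biUnion_le
    have := card_union_add_card_inter ((range k).biUnion S) (S k)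
    rw [sum_range_succ, sum_range_succ, hunion]
    omega

/-- `|A ∩ [0, n)|`; wrapping `Nat.count` fixes the decidability instance once and for all. -/
noncomputable def countBelow (A : Set ℕ) (n : ℕ) : ℕ := count (· ∈ A) n

theorem countBelow_eq_card (A : Set ℕ) (n : ℕ) : countBelow A n = #{m ∈ range n | m ∈ A} :=
  count_eq_card_filter_range _ n

theorem countBelow_coe_finset {s : Finset ℕ} {n : ℕ} (hs : s ⊆ range n) :
    countBelow s n = #s := by
  rw [countBelow_eq_card]
  congr 1
  ext m
  simpa only [mem_filter, mem_coe, and_iff_right_iff_imp] using @hs m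

theorem countBelow_le (A : Set ℕ) (n : ℕ) : countBelow A n ≤ n := count_le _

theorem countBelow_mono (A : Set ℕ) : Monotone (countBelow A) := count_monotone _

theorem countBelow_mono_left {A B : Set ℕ} (h : A ⊆ B) (n : ℕ) :
    countBelow A n ≤ countBelow B n :=
  count_mono_left fun _ _ hm => h hm

theorem countBelow_add (A : Set ℕ) (a b : ℕ) :
    countBelow A (a + b) = countBelow A a + countBelow {m | a + m ∈ A} b :=
  count_add _ a b

theorem countBelow_add_le (A : Set ℕ) (n c : ℕ) :
    countBelow A (n + c) ≤ countBelow A n + c := by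
  rw [countBelow_add]
  exact Nat.add_le_add_left (countBelow_le _ c) _

theorem mul_countBelow_le (A : Set ℕ) (t k n : ℕ) :
    k * countBelow A n ≤ n + k * (k * t) + ∑ i ∈ range k, ∑ j ∈ range i,
      countBelow {p ∈ A | p + (i - j) * t ∈ A} (n + k * t) := by
  set S : ℕ → Finset ℕ := fun i => {m ∈ range n | i * t + m ∈ A}
  have hunion : #((range k).biUnion S) ≤ n :=
    (card_le_card (biUnion_subset.2 fun i _ => filter_subset _ _)).trans (card_range n).le
  have hsingle : ∀ i ∈ range k, countBelow A n ≤ #(S i) + k * t := by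
    intro i hi
    have hS : #(S i) = countBelow {m | i * t + m ∈ A} n := (countBelow_eq_card _ n).symm
    have := countBelow_add A (i * t) n
    have := countBelow_mono A (show n ≤ i * t + n by omega)
    have := countBelow_le A (i * t)
    have := Nat.mul_le_mul_right t (mem_range.1 hi).le
    omega
  have hpair : ∀ i ∈ range k, ∀ j ∈ range i,
      #(S i ∩ S j) ≤ countBelow {p ∈ A | p + (i - j) * t ∈ A} (n + k * t) := by
    intro i hi j hj
    have hji : j * t + (i - j) * t = i * t := by
      rw [← add_mul, Nat.add_sub_cancel' (mem_range.1 hj).le]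
    have hjk : j * t ≤ k * t :=
      Nat.mul_le_mul_right t ((mem_range.1 hj).trans (mem_range.1 hi)).le
    set B : Set ℕ := {p ∈ A | p + (i - j) * t ∈ A}
    have hmem : (↑(S i ∩ S j) : Set ℕ) ⊆ {m | j * t + m ∈ B} := by
      intro m hm
      simp only [S, coe_inter, coe_filter, Set.mem_inter_iff, Set.mem_ofPred_eq] at hm
      exact ⟨hm.2.2, by rw [show j * t + m + (i - j) * t = i * t + m by omega]; exact hm.1.2⟩
    calc #(S i ∩ S j)
        = countBelow (S i ∩ S j : Finset ℕ) n :=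
          (countBelow_coe_finset (inter_subset_left.trans (filter_subset _ _))).symm
      _ ≤ countBelow {m | j * t + m ∈ B} n := countBelow_mono_left hmem n
      _ ≤ countBelow B (j * t + n) := by
          rw [countBelow_add]; exact le_add_self
      _ ≤ _ := countBelow_mono _ (by omega)
  calc k * countBelow A n
      ≤ ∑ i ∈ range k, (#(S i) + k * t) := by
        simpa using sum_le_sum hsingle
    _ = ∑ i ∈ range k, #(S i) + k * (k * t) := by simp [sum_add_distrib]
    _ ≤ n + k * (k * t) + ∑ i ∈ range k, ∑ j ∈ range i, #(S i ∩ S j) := by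
        have := sum_card_le_card_biUnion_add_sum_card_inter S k
        omega
    _ ≤ _ := by gcongr with i hi j hj; exact hpair i hi j hj

noncomputable def partialDensity (A : Set ℕ) (n : ℕ) : ℝ := (countBelow A n : ℝ) / n

theorem upperDensity_eq_limsup_partialDensity (A : Set ℕ) :
    upperDensity A = limsup (partialDensity A) atTop := by
  unfold upperDensity partialDensity
  congr with n
  rw [countBelow_eq_card, ← Set.ncard_coe_finset, Nat.card_coe_set_eq]
  congr 3
  ext m
  simp [and_comm]

theorem partialDensity_nonneg (A : Set ℕ) (n : ℕ) : 0 ≤ partialDensity A n := by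
  unfold partialDensity; positivity

theorem partialDensity_le_one (A : Set ℕ) (n : ℕ) : partialDensity A n ≤ 1 :=
  div_le_one_of_le₀ (mod_cast countBelow_le A n) n.cast_nonneg

theorem isBoundedUnder_le_partialDensity (A : Set ℕ) :
    IsBoundedUnder (· ≤ ·) atTop (partialDensity A) :=
  isBoundedUnder_of ⟨1, partialDensity_le_one A⟩

theorem isBoundedUnder_ge_partialDensity (A : Set ℕ) :
    IsBoundedUnder (· ≥ ·) atTop (partialDensity A) :=
  isBoundedUnder_of ⟨0, partialDensity_nonneg A⟩

theorem upperDensity_nonneg (A : Set ℕ) : 0 ≤ upperDensity A := by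
  rw [upperDensity_eq_limsup_partialDensity]
  exact le_limsup_of_frequently_le (Frequently.of_forall (partialDensity_nonneg A))
    (isBoundedUnder_le_partialDensity A)

theorem upperDensity_mono_s4 : Monotone upperDensity := by
  intro A B hAB
  simp only [upperDensity_eq_limsup_partialDensity]
  refine limsup_le_limsup (Eventually.of_forall fun n => ?_)
    (isBoundedUnder_ge_partialDensity A).isCoboundedUnder_le (isBoundedUnder_le_partialDensity B)
  exact div_le_div_of_nonneg_right (mod_cast countBelow_mono_left hAB n) n.cast_nonneg

theorem tendsto_countBelow_add_div_of_upperDensity_eq_zero {A : Set ℕ} (hA : upperDensity A = 0)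
    (c : ℕ) : Tendsto (fun n : ℕ => (countBelow A (n + c) : ℝ) / n) atTop (𝓝 0) := by
  have hdens : Tendsto (partialDensity A) atTop (𝓝 0) :=
    tendsto_of_le_liminf_of_limsup_le
      (le_liminf_of_le (isBoundedUnder_le_partialDensity A).isCoboundedUnder_ge
        (Eventually.of_forall (partialDensity_nonneg A)))
      (upperDensity_eq_limsup_partialDensity A ▸ hA.le)
      (isBoundedUnder_le_partialDensity A) (isBoundedUnder_ge_partialDensity A)
  have hbound : Tendsto (fun n : ℕ => partialDensity A n + c / n) atTop (𝓝 0) := by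
    simpa using hdens.add (tendsto_const_div_atTop_nhds_zero_nat (c : ℝ))
  have hle (n : ℕ) : (countBelow A (n + c) : ℝ) / n ≤ partialDensity A n + c / n := by
    rw [partialDensity, ← add_div]
    gcongr
    exact_mod_cast countBelow_add_le A n c
  exact tendsto_of_tendsto_of_tendsto_of_le_of_le tendsto_const_nhds hbound
    (fun n => by positivity) hle

theorem upperDensity_le_inv_of_upperDensity_inter_shift_eq_zero (A : Set ℕ) (t : ℕ) {k : ℕ}
    (hk : 0 < k) (h : ∀ d, 0 < d → d < k → upperDensity {p ∈ A | p + d * t ∈ A} = 0) :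
    upperDensity A ≤ 1 / k := by
  set S : ℕ → ℝ := fun n =>
    ∑ i ∈ range k, ∑ j ∈ range i,
      (countBelow {p ∈ A | p + (i - j) * t ∈ A} (n + k * t) : ℝ)
  set K : ℝ := ((k * (k * t) : ℕ) : ℝ)
  set g : ℕ → ℝ := fun n => (1 + K / n + S n / n) / k
  have hS : Tendsto (fun n : ℕ => S n / n) atTop (𝓝 0) := by
    have := tendsto_finsetSum (range k) fun i hi => tendsto_finsetSum (range i) fun j hj =>
      tendsto_countBelow_add_div_of_upperDensity_eq_zero
        (h (i - j) (by simp at hj; omega) (by simp at hi; omega)) (k * t)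
    simp only [sum_const_zero] at this
    exact this.congr fun n => by simp only [S, sum_div]
  have hg : Tendsto g atTop (𝓝 (1 / k)) := by
    simpa using (((tendsto_const_nhds (x := (1 : ℝ))).add
      (tendsto_const_div_atTop_nhds_zero_nat K)).add hS).div_const (k : ℝ)
  have hle : ∀ n ≥ 1, partialDensity A n ≤ g n := by
    intro n hn
    have hnR : (0 : ℝ) < n := by exact_mod_cast hn
    have hkR : (0 : ℝ) < k := by exact_mod_cast hk
    have hcount : (k * countBelow A n : ℝ) ≤ n + K + S n := by
      simp only [K, S]
      exact_mod_cast mul_countBelow_le A t k n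
    rw [partialDensity, div_le_div_iff₀ hnR hkR]
    field_simp
    linarith
  rw [upperDensity_eq_limsup_partialDensity, ← hg.limsup_eq]
  exact limsup_le_limsup (eventually_atTop.2 ⟨1, hle⟩)
    (isBoundedUnder_ge_partialDensity A).isCoboundedUnder_le hg.isBoundedUnder_le

theorem exists_gt_upperDensity_inter_shift_pos {A : Set ℕ} (hA : 0 < upperDensity A) (L : ℕ) :
    ∃ l > L, 0 < upperDensity {n ∈ A | n + l ∈ A} := by
  by_contra! h
  obtain ⟨k, hk⟩ := exists_nat_gt (1 / upperDensity A)
  have hk0 : 0 < k := by exact_mod_cast (one_div_pos.2 hA).trans hk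
  have hle := upperDensity_le_inv_of_upperDensity_inter_shift_eq_zero A (L + 1) hk0
    fun d hd _ => (h (d * (L + 1)) (by nlinarith)).antisymm (upperDensity_nonneg _)
  have := (one_div_lt hA (by exact_mod_cast hk0)).1 hk
  linarith

theorem exists_strictMono_of_exists_gt_inter_shift {P : Set ℕ → Prop} (hP : Monotone P)
    (hstep : ∀ A, P A → ∀ L, ∃ l > L, P {n ∈ A | n + l ∈ A}) {G : Set ℕ} (hG : P G) :
    ∃ l : ℕ → ℕ, StrictMono l ∧ 0 < l 0 ∧
      ∀ s, P {n ∈ G | ∀ j ≤ s, n + l j ∈ G} := by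
  choose next hnext_gt hnext using hstep
  let step : {p : ℕ × Set ℕ // P p.2} → {p : ℕ × Set ℕ // P p.2} := fun p =>
    ⟨(next p.1.2 p.2 p.1.1, {n ∈ p.1.2 | n + next p.1.2 p.2 p.1.1 ∈ p.1.2}), hnext _ _ _⟩
  let seq : ℕ → {p : ℕ × Set ℕ // P p.2} :=
    fun s => Nat.rec (step ⟨(0, G), hG⟩) (fun _ p => step p) s
  have hsub : ∀ s, (seq s).1.2 ⊆ {n ∈ G | ∀ j ≤ s, n + (seq j).1.1 ∈ G} := by
    intro s
    induction s with
    | zero =>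
      rintro n ⟨hn, hnl⟩
      exact ⟨hn, fun j hj => (show j = 0 by omega) ▸ hnl⟩
    | succ s ih =>
      rintro n ⟨hn, hnl⟩
      refine ⟨(ih hn).1, fun j hj => ?_⟩
      rcases Nat.le_succ_iff.1 hj with hj | rfl
      · exact (ih hn).2 j hj
      · exact (ih hnl).1
  exact ⟨fun s => (seq s).1.1, strictMono_nat_of_lt_succ fun s => hnext_gt _ _ _,
    hnext_gt _ _ _, fun s => hP (hsub s) (seq s).2⟩

/-- Let `G ⊆ ℕ` have positive upper density. Then there is a strictly increasing
sequence of positive integers `l 0 < l 1 < …` (here `l j` plays the role of `l_{j+1}`)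
such that for every `s`, the set `G(l 0, …, l s) = {n ∈ G : n + l j ∈ G for all j ≤ s}`
has positive upper density. -/
theorem stmt_4 (G : Set ℕ) (hG : 0 < upperDensity G) :
    ∃ l : ℕ → ℕ, StrictMono l ∧ 0 < l 0 ∧
      ∀ s : ℕ, 0 < upperDensity {n ∈ G | ∀ j ≤ s, n + l j ∈ G} :=
  exists_strictMono_of_exists_gt_inter_shift (fun _ _ hAB hA => hA.trans_le (upperDensity_mono_s4 hAB))
    (fun _ hA L => exists_gt_upperDensity_inter_shift_pos hA L) hG
end

section
/- Let ε ∈ (0,1) and let A, B ⊆ ℕ satisfy d̄(ℕ∖A) ≤ ε and d̄(ℕ∖B) ≤ ε. Set G := A ∩ α({m ∈ ℕ : β(m) ∈ B}). Then d̲(G) ≥ (χ/log L)·(1 − (log L/χ')·ε) − ε. -/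
open Filter Set Topology

lemma ncard_inter_Iio_div_le_one (X : Set ℕ) (n : ℕ) : ((X ∩ Iio n).ncard : ℝ) / n ≤ 1 := by
  refine div_le_one_of_le₀ ?_ n.cast_nonneg
  exact_mod_cast (ncard_le_ncard inter_subset_right (finite_Iio n)).trans_eq (ncard_Iio_nat n)

lemma isBoundedUnder_ncard_inter_Iio_div (X : Set ℕ) :
    IsBoundedUnder (· ≤ ·) atTop fun n : ℕ => ((X ∩ Iio n).ncard : ℝ) / n :=
  isBoundedUnder_of ⟨1, ncard_inter_Iio_div_le_one X⟩

lemma lowerDensity_nonneg (X : Set ℕ) : 0 ≤ lowerDensity X :=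
  le_liminf_of_le (isBoundedUnder_ncard_inter_Iio_div X).isCoboundedUnder_ge
    (Eventually.of_forall fun _ => by positivity)

lemma eventually_ncard_inter_Iio_le {X : Set ℕ} {e : ℝ} (h : upperDensity X < e) :
    ∀ᶠ n : ℕ in atTop, ((X ∩ Iio n).ncard : ℝ) ≤ e * n := by
  filter_upwards [eventually_lt_of_limsup_lt h (isBoundedUnder_ncard_inter_Iio_div X),
    eventually_gt_atTop 0] with n hn hn0
  exact ((div_lt_iff₀ (by exact_mod_cast hn0)).1 hn).le

lemma exists_ncard_inter_Iio_le {X : Set ℕ} {e : ℝ} (h : upperDensity X < e) (he : 0 ≤ e) :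
    ∃ C : ℝ, ∀ n : ℕ, ((X ∩ Iio n).ncard : ℝ) ≤ e * n + C := by
  obtain ⟨N, hN⟩ := eventually_atTop.1 (eventually_ncard_inter_Iio_le h)
  refine ⟨N, fun n => ?_⟩
  rcases le_or_gt N n with hn | hn
  · linarith [hN n hn, (Nat.cast_nonneg N : (0 : ℝ) ≤ N)]
  · have : ((X ∩ Iio n).ncard : ℝ) ≤ N := by
      exact_mod_cast (ncard_le_ncard inter_subset_right (finite_Iio n)).trans
        ((ncard_Iio_nat n).trans_le hn.le)
    linarith [mul_nonneg he n.cast_nonneg]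

lemma le_lowerDensity_of_eventually_le {X : Set ℕ} {d : ℝ} (C : ℝ)
    (h : ∀ᶠ n : ℕ in atTop, d * n - C ≤ (X ∩ Iio n).ncard) : d ≤ lowerDensity X := by
  refine le_of_forall_sub_le fun δ hδ => ?_
  refine le_liminf_of_le (isBoundedUnder_ncard_inter_Iio_div X).isCoboundedUnder_ge ?_
  filter_upwards [h, eventually_ge_atTop ⌈C / δ⌉₊, eventually_gt_atTop 0] with n hn hCn hn0
  have hn0' : (0 : ℝ) < n := by exact_mod_cast hn0
  have hC : C ≤ δ * n := by
    have := (Nat.le_ceil (C / δ)).trans (Nat.cast_le.2 hCn : (⌈C / δ⌉₊ : ℝ) ≤ n)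
    rw [div_le_iff₀ hδ] at this
    linarith
  rw [Nat.card_coe_set_eq, le_div_iff₀ hn0']
  linarith

lemma le_ncard_add_ncard_add_ncard {α β : ℕ → ℕ} (hα : StrictMono α) (hβ : StrictMono β)
    (A B : Set ℕ) {k n : ℕ} (hk : ∀ m < k, α m < n) :
    k ≤ (A ∩ α '' {m | β m ∈ B} ∩ Iio n).ncard + (Aᶜ ∩ Iio n).ncard + (Bᶜ ∩ Iio (β k)).ncard := by
  have hsplit := ncard_inter_add_ncard_sdiff_eq_ncard (Iio k) (β ⁻¹' B)
  rw [ncard_Iio_nat] at hsplit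
  have hgood : (Iio k ∩ β ⁻¹' B).ncard ≤
      (A ∩ α '' {m | β m ∈ B} ∩ Iio n).ncard + (Aᶜ ∩ Iio n).ncard := by
    calc (Iio k ∩ β ⁻¹' B).ncard ≤ ((A ∩ α '' {m | β m ∈ B} ∪ Aᶜ) ∩ Iio n).ncard :=
          ncard_le_ncard_of_injOn α
            (fun m hm => ⟨(em (α m ∈ A)).imp (fun hmA => ⟨hmA, m, hm.2, rfl⟩) id, hk m hm.1⟩)
            hα.injective.injOn ((finite_Iio n).inter_of_right _)
      _ ≤ _ := by rw [union_inter_distrib_right]; exact ncard_union_le _ _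
  have hbad : (Iio k \ β ⁻¹' B).ncard ≤ (Bᶜ ∩ Iio (β k)).ncard :=
    ncard_le_ncard_of_injOn β (fun m hm => ⟨hm.2, hβ hm.1⟩) hβ.injective.injOn
      ((finite_Iio _).inter_of_right _)
  omega

lemma firstIndex_le_of_lt_ceil {a : ℕ → ℝ} {c : ℝ} {α : ℕ → ℕ}
    (hα : ∀ m : ℕ, IsLeast {n : ℕ | a n ≥ (m : ℝ) * c} (α m)) (hc : 0 < c) (N : ℕ) {m : ℕ}
    (hm : m < ⌈a N / c⌉₊) : α m ≤ N :=
  (hα m).2 ((lt_div_iff₀ hc).1 (Nat.lt_ceil.1 hm)).le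

lemma firstIndex_le_div_add_one {b : ℕ → ℝ} {c χ' Q' : ℝ} {β : ℕ → ℕ}
    (hβ : ∀ m : ℕ, IsLeast {n : ℕ | b n ≥ (m : ℝ) * c} (β m))
    (hb : ∀ n : ℕ, b n ≥ n * χ' - Q') (hc : 0 ≤ c) (hχ' : 0 < χ') (hQ' : 0 ≤ Q') (k : ℕ) :
    (β k : ℝ) ≤ (k * c + Q') / χ' + 1 := by
  obtain hk | hk := Nat.eq_zero_or_pos (β k)
  · rw [hk, Nat.cast_zero]
    positivity
  obtain ⟨j, hj⟩ : ∃ j, β k = j + 1 := ⟨β k - 1, by omega⟩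
  have hbj : b j < k * c := by
    by_contra! h
    have := (hβ k).2 h
    omega
  have hj' : (j : ℝ) < (k * c + Q') / χ' := by
    rw [lt_div_iff₀ hχ']
    linarith [hb j]
  rw [hj]
  push_cast
  linarith

theorem le_lowerDensity_inter_image {c χ χ' Q Q' e : ℝ} (hc : 0 < c) (hχ' : 0 < χ')
    (hQ' : 0 ≤ Q') {a b : ℕ → ℝ} (ha : ∀ n : ℕ, a n ≥ n * χ - Q)
    (hb : ∀ n : ℕ, b n ≥ n * χ' - Q') {α β : ℕ → ℕ}
    (hα : ∀ m : ℕ, IsLeast {n : ℕ | a n ≥ (m : ℝ) * c} (α m))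
    (hβ : ∀ m : ℕ, IsLeast {n : ℕ | b n ≥ (m : ℝ) * c} (β m))
    (hαmono : StrictMono α) (hβmono : StrictMono β) {A B : Set ℕ}
    (hA : upperDensity Aᶜ < e) (hB : upperDensity Bᶜ < e) (he : 0 ≤ e) (hec : e * c ≤ χ') :
    χ / c * (1 - c / χ' * e) - e ≤ lowerDensity (A ∩ α '' {m | β m ∈ B}) := by
  set r := 1 - c / χ' * e with hr_def
  have hr : 0 ≤ r := by
    rw [hr_def, sub_nonneg, div_mul_eq_mul_div, div_le_one hχ', mul_comm]
    exact hec
  obtain ⟨C, hC⟩ := exists_ncard_inter_Iio_le hB he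
  obtain ⟨N₀, hN₀⟩ := eventually_atTop.1 (eventually_ncard_inter_Iio_le hA)
  refine le_lowerDensity_of_eventually_le ((χ + Q) / c * r + e * (Q' / χ' + 1) + C)
    (eventually_atTop.2 ⟨N₀ + 1, fun n hn => ?_⟩)
  obtain ⟨N, rfl⟩ : ∃ N, n = N + 1 := ⟨n - 1, by omega⟩
  set k := ⌈a N / c⌉₊
  have hcount := le_ncard_add_ncard_add_ncard hαmono hβmono A B (k := k) (n := N + 1)
    fun m hm => Nat.lt_succ_of_le (firstIndex_le_of_lt_ceil hα hc N hm)
  have hk : (N * χ - Q) / c ≤ k := (div_le_div_of_nonneg_right (ha N) hc.le).trans (Nat.le_ceil _)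
  have hβk := firstIndex_le_div_add_one hβ hb hc.le hχ' hQ' k
  have hAn := hN₀ (N + 1) (by omega)
  have hBk := hC (β k)
  calc (χ / c * r - e) * ↑(N + 1) - ((χ + Q) / c * r + e * (Q' / χ' + 1) + C)
      = (N * χ - Q) / c * r - e * ↑(N + 1) - e * (Q' / χ' + 1) - C := by
        push_cast; field_simp; ring
    _ ≤ k * r - e * ↑(N + 1) - e * (Q' / χ' + 1) - C := by gcongr
    _ = k - e * ↑(N + 1) - e * ((k * c + Q') / χ' + 1) - C := by
        rw [hr_def]; field_simp; ring
    _ ≤ k - e * ↑(N + 1) - e * β k - C := by gcongr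
    _ ≤ _ := by
        have := (Nat.cast_le (α := ℝ)).2 hcount
        push_cast at this
        linarith

theorem stmt_6_general (L χ χ' Q Q' : ℝ) (hL : 1 < L) (hχ : 0 < χ) (hχ' : 0 < χ')
    (hQ' : 0 < Q')
    (a b : ℕ → ℝ)
    (hagrow : ∀ n : ℕ, a n ≥ (n : ℝ) * χ - Q)
    (hbgrow : ∀ n : ℕ, b n ≥ (n : ℝ) * χ' - Q')
    (α β : ℕ → ℕ)
    (hα : ∀ m : ℕ, IsLeast {n : ℕ | a n ≥ (m : ℝ) * Real.log L} (α m))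
    (hβ : ∀ m : ℕ, IsLeast {n : ℕ | b n ≥ (m : ℝ) * Real.log L} (β m))
    (hαmono : StrictMono α) (hβmono : StrictMono β)
    (ε : ℝ) (hε : ε ∈ Set.Ioo (0 : ℝ) 1)
    (A B : Set ℕ) (hA : upperDensity Aᶜ ≤ ε) (hB : upperDensity Bᶜ ≤ ε) :
    (χ / Real.log L) * (1 - (Real.log L / χ') * ε) - ε ≤
      lowerDensity (A ∩ α '' {m : ℕ | β m ∈ B}) := by
  have hc : 0 < Real.log L := Real.log_pos hL
  rcases le_or_gt χ' (ε * Real.log L) with hbig | hsmall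
  · have hr : 1 - Real.log L / χ' * ε ≤ 0 := by
      rw [sub_nonpos, div_mul_eq_mul_div, one_le_div hχ', mul_comm]
      exact hbig
    have := mul_nonpos_of_nonneg_of_nonpos (div_pos hχ hc).le hr
    linarith [hε.1, lowerDensity_nonneg (A ∩ α '' {m : ℕ | β m ∈ B})]
  · have hlim : Tendsto (fun e => χ / Real.log L * (1 - Real.log L / χ' * e) - e) (𝓝[>] ε)
        (𝓝 (χ / Real.log L * (1 - Real.log L / χ' * ε) - ε)) :=
      (Continuous.tendsto (by fun_prop) ε).mono_left nhdsWithin_le_nhds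
    refine le_of_tendsto hlim ?_
    filter_upwards [self_mem_nhdsWithin, nhdsWithin_le_nhds
      ((continuous_id.mul continuous_const).continuousAt.eventually_lt continuousAt_const hsmall)]
      with e (he : ε < e) hec
    exact le_lowerDensity_inter_image hc hχ' hQ'.le hagrow hbgrow hα hβ hαmono hβmono
      (hA.trans_lt he) (hB.trans_lt he) (hε.1.le.trans he.le) hec.le

/-- Fix `L > 1`, `χ, χ', Q, Q' > 0` and sequences `a, b : ℕ → ℝ` as in the context,
with `α, β : ℕ → ℕ` the associated least-index functions (strictly increasing).
Let `ε ∈ (0,1)` and `A, B ⊆ ℕ` with `d̄(ℕ∖A) ≤ ε`, `d̄(ℕ∖B) ≤ ε`. Set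
`G := A ∩ α({m : β m ∈ B})`. Then `d̲(G) ≥ (χ/log L)·(1 − (log L/χ')·ε) − ε`. -/
theorem stmt_6 (L χ χ' Q Q' : ℝ) (hL : 1 < L) (hχ : 0 < χ) (hχ' : 0 < χ')
    (hQ : 0 < Q) (hQ' : 0 < Q')
    (a b : ℕ → ℝ) (ha0 : a 0 = 0) (hb0 : b 0 = 0)
    (hastep : ∀ n : ℕ, a (n + 1) ≤ a n + Real.log L)
    (hbstep : ∀ n : ℕ, b (n + 1) ≤ b n + Real.log L)
    (hagrow : ∀ n : ℕ, a n ≥ (n : ℝ) * χ - Q)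
    (hbgrow : ∀ n : ℕ, b n ≥ (n : ℝ) * χ' - Q')
    (α β : ℕ → ℕ)
    (hα : ∀ m : ℕ, IsLeast {n : ℕ | a n ≥ (m : ℝ) * Real.log L} (α m))
    (hβ : ∀ m : ℕ, IsLeast {n : ℕ | b n ≥ (m : ℝ) * Real.log L} (β m))
    (hαmono : StrictMono α) (hβmono : StrictMono β)
    (ε : ℝ) (hε : ε ∈ Set.Ioo (0 : ℝ) 1)
    (A B : Set ℕ) (hA : upperDensity Aᶜ ≤ ε) (hB : upperDensity Bᶜ ≤ ε) :
    (χ / Real.log L) * (1 - (Real.log L / χ') * ε) - ε ≤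
      lowerDensity (A ∩ α '' {m : ℕ | β m ∈ B}) :=
  stmt_6_general L χ χ' Q Q' hL hχ hχ' hQ' a b hagrow hbgrow α β hα hβ hαmono hβmono ε hε A B hA hB
end

section
/- Let λ ∈ ℂ with |λ| > 1 and let (l_n) be a sequence of natural numbers with l_n → ∞. Let σ_n : 𝔻 → ℂ be C¹ maps, and write a_n := σ_n(0) and b_n := dσ_n(0). Assume that ‖b_n − id‖ → 0 in operator norm, that sup_{z∈𝔻} ‖dσ_n(z) − b_n‖ → 0, and that λ^{l_n}·a_n converges to some a ∈ ℂ. Then the maps δ_n(z) := λ^{l_n}·σ_n(λ^{−l_n}·z) converge uniformly on 𝔻 to the translation z ↦ z + a. -/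
open Metric Filter

/-!
If `‖dσ(x) - id‖ ≤ ε` on the unit ball, the mean value inequality gives
`‖σ w - σ 0 - w‖ ≤ ε ‖w‖` there. For `‖c‖ ≥ 1` the point `w = c⁻¹ z` stays in the ball, and
multiplying by `c` turns this into `‖c σ(c⁻¹ z) - c σ(0) - z‖ ≤ ε ‖z‖ < ε`: the rescaling
magnifies the error by `‖c‖` but shrinks the argument by the same factor. Adding the
convergence `c σ(0) → a` gives the theorem.
-/

section Rescaling

variable {E : Type*} [NormedAddCommGroup E] [NormedSpace ℂ E]

theorem norm_smul_comp_inv_smul_sub_le {f : E → E} {C : ℝ} {c : ℂ} (hc : 1 ≤ ‖c‖)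
    (hf : DifferentiableOn ℝ f (ball 0 1))
    (hbound : ∀ x ∈ ball (0 : E) 1, ‖fderiv ℝ f x - ContinuousLinearMap.id ℝ E‖ ≤ C)
    {z : E} (hz : z ∈ ball 0 1) :
    ‖c • f (c⁻¹ • z) - c • f 0 - z‖ ≤ C * ‖z‖ := by
  have hc0 : c ≠ 0 := norm_pos_iff.mp (zero_lt_one.trans_le hc)
  set w := c⁻¹ • z
  have hcw : ‖c‖ * ‖w‖ = ‖z‖ := by rw [← norm_smul, smul_inv_smul₀ hc0]
  have hw : w ∈ ball (0 : E) 1 := by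
    rw [mem_ball_zero_iff] at hz ⊢
    nlinarith [norm_nonneg w]
  have hmvt : ‖f w - f 0 - w‖ ≤ C * ‖w‖ := by
    simpa using (convex_ball (0 : E) 1).norm_image_sub_le_of_norm_fderiv_le'
      (fun x hx => hf.differentiableAt (isOpen_ball.mem_nhds hx)) hbound (mem_ball_self one_pos) hw
  calc ‖c • f w - c • f 0 - z‖ = ‖c‖ * ‖f w - f 0 - w‖ := by
        rw [← norm_smul, smul_sub, smul_sub, smul_inv_smul₀ hc0]
    _ ≤ ‖c‖ * (C * ‖w‖) := by gcongr
    _ = C * ‖z‖ := by rw [← hcw]; ring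

theorem tendstoUniformlyOn_smul_comp_inv_smul_sub {ι : Type*} {p : Filter ι} {c : ι → ℂ}
    (hc : ∀ i, 1 ≤ ‖c i‖) {f : ι → E → E} (hf : ∀ i, DifferentiableOn ℝ (f i) (ball 0 1))
    (hderiv : TendstoUniformlyOn (fun i => fderiv ℝ (f i)) (fun _ => ContinuousLinearMap.id ℝ E)
      p (ball 0 1)) :
    TendstoUniformlyOn (fun i z => c i • f i ((c i)⁻¹ • z) - c i • f i 0) id p (ball 0 1) := by
  rw [Metric.tendstoUniformlyOn_iff] at hderiv ⊢
  intro ε hε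
  filter_upwards [hderiv ε hε] with i hi z hz
  have hbound : ∀ x ∈ ball (0 : E) 1, ‖fderiv ℝ (f i) x - ContinuousLinearMap.id ℝ E‖ ≤ ε :=
    fun x hx => by simpa [dist_eq_norm'] using (hi x hx).le
  calc dist z (c i • f i ((c i)⁻¹ • z) - c i • f i 0)
      = ‖c i • f i ((c i)⁻¹ • z) - c i • f i 0 - z‖ := dist_eq_norm' _ _
    _ ≤ ε * ‖z‖ := norm_smul_comp_inv_smul_sub_le (hc i) (hf i) hbound hz
    _ < ε := mul_lt_of_lt_one_right hε (mem_ball_zero_iff.mp hz)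

end Rescaling

theorem stmt_11_general (lam : ℂ) (hlam : 1 < ‖lam‖)
    (l : ℕ → ℕ)
    (σ : ℕ → ℂ → ℂ) (hC1 : ∀ n, ContDiffOn ℝ 1 (σ n) (ball 0 1))
    (a : ℂ)
    (hb : Tendsto (fun n => fderiv ℝ (σ n) 0) atTop (nhds (ContinuousLinearMap.id ℝ ℂ)))
    (hderiv : TendstoUniformlyOn (fun n z => fderiv ℝ (σ n) z - fderiv ℝ (σ n) 0)
      (fun _ => 0) atTop (ball 0 1))
    (ha : Tendsto (fun n => lam ^ l n * σ n 0) atTop (nhds a)) :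
    TendstoUniformlyOn (fun n z => lam ^ l n * σ n ((lam ^ l n)⁻¹ * z))
      (fun z => z + a) atTop (ball 0 1) := by
  have hfderiv : TendstoUniformlyOn (fun n => fderiv ℝ (σ n))
      (fun _ => ContinuousLinearMap.id ℝ ℂ) atTop (ball 0 1) := by
    simpa [Pi.add_def] using hderiv.add (hb.tendstoUniformlyOn_const (ball 0 1))
  have hscale (n : ℕ) : 1 ≤ ‖lam ^ l n‖ := by rw [norm_pow]; exact one_le_pow₀ hlam.le
  have hrescaled := tendstoUniformlyOn_smul_comp_inv_smul_sub hscale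
    (fun n => (hC1 n).differentiableOn one_ne_zero) hfderiv
  simpa [Pi.add_def] using hrescaled.add (ha.tendstoUniformlyOn_const (ball 0 1))

/-- Let `λ ∈ ℂ` with `|λ| > 1`, `l_n → ∞`, and `σ_n : 𝔻 → ℂ` be `C¹` maps with
`a_n := σ_n(0)` and `b_n := dσ_n(0)`. Assume `b_n → id` in operator norm,
`sup_{z∈𝔻} ‖dσ_n(z) − b_n‖ → 0`, and `λ^{l_n}·a_n → a`. Then the maps
`δ_n(z) := λ^{l_n}·σ_n(λ^{−l_n}·z)` converge uniformly on `𝔻` to `z ↦ z + a`. -/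
theorem stmt_11 (lam : ℂ) (hlam : 1 < ‖lam‖)
    (l : ℕ → ℕ) (hl : Tendsto l atTop atTop)
    (σ : ℕ → ℂ → ℂ) (hC1 : ∀ n, ContDiffOn ℝ 1 (σ n) (ball 0 1))
    (a : ℂ)
    (hb : Tendsto (fun n => fderiv ℝ (σ n) 0) atTop (nhds (ContinuousLinearMap.id ℝ ℂ)))
    (hderiv : TendstoUniformlyOn (fun n z => fderiv ℝ (σ n) z - fderiv ℝ (σ n) 0)
      (fun _ => 0) atTop (ball 0 1))
    (ha : Tendsto (fun n => lam ^ l n * σ n 0) atTop (nhds a)) :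
    TendstoUniformlyOn (fun n z => lam ^ l n * σ n ((lam ^ l n)⁻¹ * z))
      (fun z => z + a) atTop (ball 0 1) :=
  stmt_11_general lam hlam l σ hC1 a hb hderiv ha
end

section
/- Let λ ∈ ℝ with λ > 1, let δ > 0, and let h : D(0,δ) → ℂ be real analytic on the open disk D(0,δ) ⊆ ℂ, such that h(λ·z) = λ·h(z) for every z ∈ ℂ with |z| < δ/λ. Then h coincides on D(0,δ) with the ℝ-linear map dh(0); in particular h is the restriction of an ℝ-linear map ℂ → ℂ. -/
/-!
Iterating the functional equation gives `h (λ⁻ⁿ • z) = λ⁻ⁿ • h z` for every `z` in the disk.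
Hence the difference quotients of `t ↦ h (t • z)` at `0` along `t = λ⁻ⁿ → 0` are all equal to
`h z`, while they converge to `dh(0) z` because `h` is differentiable at `0`.
-/

open Metric Filter Topology

theorem smul_pow_eq_pow_smul_of_smul_eq {R M N : Type*} [Monoid R] [MulAction R M]
    [MulAction R N] {s : Set M} {h : M → N} {c : R} (hs : ∀ x ∈ s, c • x ∈ s)
    (hh : ∀ x ∈ s, h (c • x) = c • h x) (n : ℕ) {x : M} (hx : x ∈ s) :
    h (c ^ n • x) = c ^ n • h x := by
  induction n generalizing x with
  | zero => simp
  | succ n ih => rw [pow_succ, mul_smul, mul_smul, ih (hs x hx), hh x hx]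

theorem HasFDerivAt.eq_of_smul_eq_smul {𝕜 E F : Type*} [NontriviallyNormedField 𝕜]
    [NormedAddCommGroup E] [NormedSpace 𝕜 E] [NormedAddCommGroup F] [NormedSpace 𝕜 F]
    {h : E → F} {f : E →L[𝕜] F} (hf : HasFDerivAt h f 0) {t : ℕ → 𝕜}
    (ht : Tendsto t atTop (𝓝[≠] 0)) {z : E} (hz : ∀ n, h (t n • z) = t n • h z) :
    h z = f z := by
  have ht0 : Tendsto t atTop (𝓝 0) := tendsto_nhdsWithin_iff.mp ht |>.1
  have h_zero : h 0 = 0 := by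
    have hlim : Tendsto (fun n => h (t n • z)) atTop (𝓝 (h 0)) := by
      refine hf.continuousAt.tendsto.comp ?_
      simpa using ht0.smul_const z
    simp only [hz] at hlim
    exact tendsto_nhds_unique hlim (by simpa using ht0.smul_const (h z))
  have hline : HasDerivAt (fun s : 𝕜 => h (s • z)) (f z) 0 := by
    have hsmul : HasDerivAt (fun s : 𝕜 => s • z) z 0 := by
      simpa using (hasDerivAt_id (0 : 𝕜)).smul_const z
    exact (zero_smul 𝕜 z ▸ hf).comp_hasDerivAt (0 : 𝕜) hsmul
  have hslope := (hasDerivAt_iff_tendsto_slope.mp hline).comp ht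
  refine tendsto_nhds_unique (tendsto_const_nhds.congr' ?_) hslope
  filter_upwards [tendsto_nhdsWithin_iff.mp ht |>.2] with n hn
  simp [slope_def_module, hz, h_zero, smul_smul, inv_mul_cancel₀ (show t n ≠ 0 from hn)]

theorem stmt_13_general (lam : ℝ) (hlam : 1 < lam) (δ : ℝ)
    (h : ℂ → ℂ) (hana : AnalyticOnNhd ℝ h (ball 0 δ))
    (heq : ∀ z : ℂ, ‖z‖ < δ / lam → h ((lam : ℂ) * z) = (lam : ℂ) * h z) :
    Set.EqOn h (fun z => fderiv ℝ h 0 z) (ball 0 δ) := by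
  intro z hz
  have hlam0 : 0 < lam := one_pos.trans hlam
  have hdiff : HasFDerivAt h (fderiv ℝ h 0) 0 :=
    (hana 0 (mem_ball_self (nonempty_ball.mp ⟨z, hz⟩))).differentiableAt.hasFDerivAt
  have hnorm : ∀ x : ℂ, ‖lam⁻¹ • x‖ = ‖x‖ / lam := fun x => by
    rw [norm_smul, Real.norm_of_nonneg (inv_nonneg.mpr hlam0.le), inv_mul_eq_div]
  have hmaps : ∀ x ∈ ball (0 : ℂ) δ, lam⁻¹ • x ∈ ball (0 : ℂ) δ := fun x hx => by
    rw [mem_ball_zero_iff] at hx ⊢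
    rw [hnorm]
    exact (div_le_self (norm_nonneg x) hlam.le).trans_lt hx
  have hscale : ∀ x ∈ ball (0 : ℂ) δ, h (lam⁻¹ • x) = lam⁻¹ • h x := by
    intro x hx
    have := heq (lam⁻¹ • x) (by rw [hnorm]; gcongr; exact mem_ball_zero_iff.mp hx)
    simp only [← Complex.real_smul, smul_smul, mul_inv_cancel₀ hlam0.ne', one_smul] at this
    rw [this, smul_smul, inv_mul_cancel₀ hlam0.ne', one_smul]
  refine hdiff.eq_of_smul_eq_smul (t := fun n => lam⁻¹ ^ n) ?_
    fun n => smul_pow_eq_pow_smul_of_smul_eq hmaps hscale n hz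
  exact (tendsto_pow_atTop_nhdsWithin_zero_of_lt_one (inv_pos.mpr hlam0)
    (inv_lt_one_of_one_lt₀ hlam)).mono_right (nhdsWithin_mono _ fun _ hx => hx.ne')

/-- Let `λ > 1` be real, `δ > 0`, and `h` real analytic on `D(0,δ) ⊆ ℂ` with
`h(λ·z) = λ·h(z)` whenever `|z| < δ/λ`. Then `h` coincides on `D(0,δ)` with the
`ℝ`-linear map `dh(0)`; in particular it is the restriction of an `ℝ`-linear map. -/
theorem stmt_13 (lam : ℝ) (hlam : 1 < lam) (δ : ℝ) (hδ : 0 < δ)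
    (h : ℂ → ℂ) (hana : AnalyticOnNhd ℝ h (ball 0 δ))
    (heq : ∀ z : ℂ, ‖z‖ < δ / lam → h ((lam : ℂ) * z) = (lam : ℂ) * h z) :
    Set.EqOn h (fun z => fderiv ℝ h 0 z) (ball 0 δ) :=
  stmt_13_general lam hlam δ h hana heq
end

section
/- Let T : ℂ → ℂ be a nonzero ℝ-linear map and let c₁, c₂ ∈ ℂ satisfy T(c₂·z) = c₁·T(z) for all z ∈ ℂ. If c₁ ∉ ℝ, then T is either ℂ-linear or ℂ-antilinear: there exists a ∈ ℂ such that T(z) = a·z for all z, or there exists a ∈ ℂ such that T(z) = a·conj(z) for all z. -/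
/-!
Write `T z = a z + b z̄`. Comparing coefficients of `z` and `z̄` in `T (c₂ z) = c₁ T z` gives
`a c₂ = c₁ a` and `b c̄₂ = c₁ b`; if neither `a` nor `b` vanished, then `c₂ = c₁ = c̄₂`, so `c₁`
would be real.
-/

open Complex ComplexConjugate

namespace Complex

/-- The two coefficients are the Wirtinger derivatives `∂T/∂z` and `∂T/∂z̄`. -/
theorem realLinearMap_apply_eq_mul_add_mul_conj (T : ℂ →ₗ[ℝ] ℂ) (z : ℂ) :
    T z = (T 1 - I * T I) / 2 * z + (T 1 + I * T I) / 2 * conj z := by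
  have hz : T z = z.re * T 1 + z.im * T I := by
    have hdecomp : z = z.re • (1 : ℂ) + z.im • I := by simp [real_smul]
    conv_lhs => rw [hdecomp]
    rw [map_add, map_smul, map_smul, real_smul, real_smul]
  have hconj : conj z = z.re - z.im * I := by
    conv_lhs => rw [← re_add_im z]
    simp only [map_add, map_mul, conj_ofReal, conj_I]
    ring
  rw [hz, hconj]
  linear_combination (T 1 - I * T I) / 2 * re_add_im z + (↑z.im * T I) * I_mul_I

theorem eq_zero_of_forall_mul_add_mul_conj_eq_zero {p q : ℂ}
    (h : ∀ z, p * z + q * conj z = 0) : p = 0 ∧ q = 0 := by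
  have h₁ := h 1
  have h₂ := h I
  simp only [map_one, mul_one, conj_I] at h₁ h₂
  have hpq : p = q := mul_right_cancel₀ I_ne_zero (by linear_combination h₂)
  subst hpq
  exact ⟨by linear_combination h₁ / 2, by linear_combination h₁ / 2⟩

end Complex

theorem stmt_14_general (T : ℂ →ₗ[ℝ] ℂ) (c₁ c₂ : ℂ)
    (hcomm : ∀ z : ℂ, T (c₂ * z) = c₁ * T z)
    (hc₁ : ∀ r : ℝ, c₁ ≠ (r : ℂ)) :
    (∃ a : ℂ, ∀ z : ℂ, T z = a * z) ∨
    (∃ a : ℂ, ∀ z : ℂ, T z = a * (starRingEnd ℂ) z) := by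
  set a := (T 1 - I * T I) / 2
  set b := (T 1 + I * T I) / 2
  have hT (z : ℂ) : T z = a * z + b * conj z := realLinearMap_apply_eq_mul_add_mul_conj T z
  obtain ⟨ha, hb⟩ : a * c₂ - c₁ * a = 0 ∧ b * conj c₂ - c₁ * b = 0 := by
    refine eq_zero_of_forall_mul_add_mul_conj_eq_zero fun z => ?_
    have := hcomm z
    rw [hT, hT, map_mul] at this
    linear_combination this
  rcases eq_or_ne b 0 with hb0 | hb0
  · exact .inl ⟨a, fun z => by rw [hT, hb0, zero_mul, add_zero]⟩
  rcases eq_or_ne a 0 with ha0 | ha0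
  · exact .inr ⟨b, fun z => by rw [hT, ha0, zero_mul, zero_add]⟩
  have hc₂ : c₂ = c₁ := mul_left_cancel₀ ha0 (by linear_combination ha)
  have hconj : conj c₂ = c₁ := mul_left_cancel₀ hb0 (by linear_combination hb)
  rw [hc₂, conj_eq_iff_re] at hconj
  exact (hc₁ c₁.re hconj.symm).elim

/-- Let `T : ℂ → ℂ` be a nonzero `ℝ`-linear map and `c₁, c₂ ∈ ℂ` with
`T(c₂·z) = c₁·T(z)` for all `z`. If `c₁ ∉ ℝ`, then `T` is either `ℂ`-linear
(`T z = a·z`) or `ℂ`-antilinear (`T z = a·conj z`). -/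
theorem stmt_14 (T : ℂ →ₗ[ℝ] ℂ) (hT : T ≠ 0) (c₁ c₂ : ℂ)
    (hcomm : ∀ z : ℂ, T (c₂ * z) = c₁ * T z)
    (hc₁ : ∀ r : ℝ, c₁ ≠ (r : ℂ)) :
    (∃ a : ℂ, ∀ z : ℂ, T z = a * z) ∨
    (∃ a : ℂ, ∀ z : ℂ, T z = a * (starRingEnd ℂ) z) :=
  stmt_14_general T c₁ c₂ hcomm hc₁
end

section
/- Let (M,d) be a metric space, U ⊆ M an open set, f : U → M a continuous map, and X ⊆ U a compact set with f(X) ⊆ X. If f : U → M is an open map and X is a repeller for f, then the restriction f|_X : X → X is an open map with respect to the subspace topology on X. -/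
/-! Since `X` is exactly the set of points of `U'` whose forward orbit stays in `U'`, a point
of `U'` that `f` maps into `X` already lies in `X`. Hence `f|_X (W ∩ X) = f (W ∩ U') ∩ X` for
every open `W`, and `f (W ∩ U')` is open because `f` is open on `U ⊇ U'`. -/

/-- `X` is a repeller for `f` (relative to the open domain `U`) if there is an open
set `U'` with `X ⊆ U' ⊆ U` and `X` is exactly the set of points whose entire forward
orbit stays in `U'`. -/
def IsRepeller {M : Type*} [TopologicalSpace M] (f : M → M) (U X : Set M) : Prop :=
  ∃ U' : Set M, IsOpen U' ∧ X ⊆ U' ∧ U' ⊆ U ∧ X = {x : M | ∀ n : ℕ, f^[n] x ∈ U'}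

theorem Set.MapsTo.isOpenMap_restrict_of_image_inter {α β : Type*} [TopologicalSpace α]
    [TopologicalSpace β] {f : α → β} {s : Set α} {t : Set β} (h : Set.MapsTo f s t)
    (H : ∀ W : Set α, IsOpen W → ∃ O : Set β, IsOpen O ∧ f '' (W ∩ s) = O ∩ t) :
    IsOpenMap (h.restrict f s t) := by
  intro V hV
  obtain ⟨W, hW, rfl⟩ := isOpen_induced_iff.mp hV
  obtain ⟨O, hO, hWO⟩ := H W hW
  refine isOpen_induced_iff.mpr ⟨O, hO, ?_⟩
  ext ⟨y, hy⟩
  have hy' : y ∈ O ↔ y ∈ f '' (W ∩ s) := by simp [hWO, hy]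
  rw [Set.mem_preimage, hy']
  constructor
  · rintro ⟨x, ⟨hxW, hxs⟩, rfl⟩
    exact ⟨⟨x, hxs⟩, hxW, rfl⟩
  · rintro ⟨⟨x, hxs⟩, hxW, hxy⟩
    exact ⟨x, ⟨hxW, hxs⟩, congrArg Subtype.val hxy⟩

section Repeller

variable {α : Type*} {f : α → α} {U' X : Set α}

theorem mem_of_apply_mem_of_eq_setOf_iterate_mem
    (hX : X = {x | ∀ n : ℕ, f^[n] x ∈ U'}) {z : α} (hz : z ∈ U') (hfz : f z ∈ X) : z ∈ X := by
  rw [hX] at hfz ⊢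
  rintro (_ | n)
  · exact hz
  · exact hfz n

theorem image_inter_inter_eq_of_eq_setOf_iterate_mem
    (hX : X = {x | ∀ n : ℕ, f^[n] x ∈ U'}) (hXU' : X ⊆ U') (hfX : Set.MapsTo f X X)
    (W : Set α) : f '' (W ∩ U') ∩ X = f '' (W ∩ X) := by
  ext y
  constructor
  · rintro ⟨⟨z, ⟨hzW, hzU'⟩, rfl⟩, hfz⟩
    exact ⟨z, ⟨hzW, mem_of_apply_mem_of_eq_setOf_iterate_mem hX hzU' hfz⟩, rfl⟩
  · rintro ⟨z, ⟨hzW, hzX⟩, rfl⟩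
    exact ⟨⟨z, ⟨hzW, hXU' hzX⟩, rfl⟩, hfX hzX⟩

end Repeller

theorem stmt_15_general {M : Type*} [MetricSpace M] (U : Set M)
    (f : M → M)
    (X : Set M) (hfX : Set.MapsTo f X X)
    (hopen : ∀ V : Set M, IsOpen V → V ⊆ U → IsOpen (f '' V))
    (hrep : IsRepeller f U X) :
    IsOpenMap (hfX.restrict f X X) := by
  obtain ⟨U', hU'open, hXU', hU'U, hXeq⟩ := hrep
  refine hfX.isOpenMap_restrict_of_image_inter fun W hW =>
    ⟨f '' (W ∩ U'), hopen _ (hW.inter hU'open) (Set.inter_subset_right.trans hU'U), ?_⟩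
  exact (image_inter_inter_eq_of_eq_setOf_iterate_mem hXeq hXU' hfX W).symm

/-- Let `(M,d)` be a metric space, `U ⊆ M` open, `f : U → M` continuous, and `X ⊆ U`
compact with `f(X) ⊆ X`. If `f` is an open map on `U` and `X` is a repeller for `f`,
then the restriction `f|_X : X → X` is an open map in the subspace topology. -/
theorem stmt_15 {M : Type*} [MetricSpace M] (U : Set M) (hU : IsOpen U)
    (f : M → M) (hf : ContinuousOn f U)
    (X : Set M) (hXU : X ⊆ U) (hX : IsCompact X) (hfX : Set.MapsTo f X X)
    (hopen : ∀ V : Set M, IsOpen V → V ⊆ U → IsOpen (f '' V))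
    (hrep : IsRepeller f U X) :
    IsOpenMap (hfX.restrict f X X) :=
  stmt_15_general U f X hfX hopen hrep
end

section
/- Let (M,d) be a metric space, U ⊆ M an open set, f : U → M a continuous map, and X ⊆ U a compact set with f(X) ⊆ X. Suppose there exist an open set V with X ⊆ V ⊆ U and constants λ > 1, η > 0 such that d(f(x), f(y)) ≥ λ·d(x, y) for all x, y ∈ V with d(x, y) ≤ η (f is distance expanding on a neighborhood of X), and suppose that f|_X : X → X is an open map with respect to the subspace topology on X. Then X is a repeller for f. -/
open Set Filter Topology Metric

theorem nonpos_of_mul_le_succ_of_bddAbove {u : ℕ → ℝ} {lam : ℝ} (hlam : 1 < lam)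
    (hu : ∀ n, lam * u n ≤ u (n + 1)) (hbdd : BddAbove (range u)) : u 0 ≤ 0 := by
  by_contra! h0
  have hgrowth : ∀ n, lam ^ n * u 0 ≤ u n := by
    intro n
    induction n with
    | zero => simp
    | succ n ih =>
      calc lam ^ (n + 1) * u 0 = lam * (lam ^ n * u 0) := by ring
        _ ≤ lam * u n := by gcongr
        _ ≤ u (n + 1) := hu n
  have hu_top : Tendsto u atTop atTop :=
    tendsto_atTop_mono hgrowth ((tendsto_pow_atTop_atTop_of_one_lt hlam).atTop_mul_const h0)
  exact not_bddAbove_of_tendsto_atTop hu_top hbdd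

theorem Set.MapsTo.exists_dist_lt_preimage_of_isOpenMap_restrict {α β : Type*}
    [PseudoMetricSpace α] [PseudoMetricSpace β] {f : α → β} {s : Set α} {t : Set β}
    (hf : MapsTo f s t) (hopen : IsOpenMap (hf.restrict f s t)) {a : α} (ha : a ∈ s)
    {r : ℝ} (hr : 0 < r) :
    ∃ ρ > 0, ∀ z ∈ t, dist z (f a) < ρ → ∃ w ∈ s, dist w a < r ∧ f w = z := by
  obtain ⟨ρ, hρ, hball⟩ := Metric.mem_nhds_iff.1
    (hopen.image_mem_nhds (ball_mem_nhds (⟨a, ha⟩ : s) hr))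
  refine ⟨ρ, hρ, fun z hz hzρ => ?_⟩
  obtain ⟨w, hw, hwz⟩ := hball (show (⟨z, hz⟩ : t) ∈ ball ⟨f a, hf ha⟩ ρ from hzρ)
  exact ⟨w, w.2, hw, congrArg Subtype.val hwz⟩

section Expanding

variable {M : Type*} [MetricSpace M] {f : M → M} {X V : Set M} {lam η : ℝ}

theorem eventually_mul_infDist_le_infDist_image (hV : IsOpen V) (hfV : ContinuousOn f V)
    (hXV : X ⊆ V) (hfX : MapsTo f X X) (hopenX : IsOpenMap (hfX.restrict f X X))
    (hlam : 0 ≤ lam) (hη : 0 < η)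
    (hexp : ∀ x ∈ V, ∀ y ∈ V, dist x y ≤ η → lam * dist x y ≤ dist (f x) (f y))
    {x₀ : M} (hx₀ : x₀ ∈ X) :
    ∀ᶠ y in 𝓝 x₀, y ∈ V ∧ lam * infDist y X ≤ infDist (f y) X := by
  obtain ⟨ρ, hρ, hpre⟩ :=
    hfX.exists_dist_lt_preimage_of_isOpenMap_restrict hopenX hx₀ (half_pos hη)
  have hlim : Tendsto (fun y => lam * dist y x₀) (𝓝 x₀) (𝓝 0) := by
    have : Continuous fun y => lam * dist y x₀ := by fun_prop
    simpa using this.tendsto x₀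
  have hcont : ContinuousAt f x₀ := hfV.continuousAt (hV.mem_nhds (hXV hx₀))
  filter_upwards [hV.mem_nhds (hXV hx₀), ball_mem_nhds x₀ (half_pos hη),
    hlim.eventually (gt_mem_nhds (half_pos hρ)),
    hcont.eventually (ball_mem_nhds (f x₀) (half_pos hρ))] with y hyV hyx₀ hlamy hfy
  refine ⟨hyV, le_of_not_gt fun hlt => ?_⟩
  obtain ⟨z, hzX, hyz⟩ := (infDist_lt_iff ⟨x₀, hx₀⟩).1 hlt
  have hfyz : dist (f y) z < ρ / 2 :=
    hyz.trans_le <| (mul_le_mul_of_nonneg_left (infDist_le_dist_of_mem hx₀) hlam).trans hlamy.le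
  obtain ⟨w, hwX, hwx₀, rfl⟩ := hpre z hzX <| by
    calc dist z (f x₀) ≤ dist z (f y) + dist (f y) (f x₀) := dist_triangle _ _ _
      _ < ρ / 2 + ρ / 2 := add_lt_add (by rwa [dist_comm]) hfy
      _ = ρ := add_halves ρ
  have hyw : dist y w ≤ η := by
    calc dist y w ≤ dist y x₀ + dist x₀ w := dist_triangle _ _ _
      _ ≤ η / 2 + η / 2 := add_le_add hyx₀.le (by rw [dist_comm]; exact hwx₀.le)
      _ = η := add_halves η
  refine lt_irrefl (lam * dist y w) ?_
  calc lam * dist y w ≤ dist (f y) (f w) := hexp y hyV w (hXV hwX) hyw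
    _ < lam * infDist y X := hyz
    _ ≤ lam * dist y w := mul_le_mul_of_nonneg_left (infDist_le_dist_of_mem hwX) hlam

theorem IsCompact.exists_thickening_subset_mul_infDist_le (hX : IsCompact X) (hV : IsOpen V)
    (hfV : ContinuousOn f V) (hXV : X ⊆ V) (hfX : MapsTo f X X)
    (hopenX : IsOpenMap (hfX.restrict f X X)) (hlam : 0 ≤ lam) (hη : 0 < η)
    (hexp : ∀ x ∈ V, ∀ y ∈ V, dist x y ≤ η → lam * dist x y ≤ dist (f x) (f y)) :
    ∃ t, 0 < t ∧ thickening t X ⊆ {y | y ∈ V ∧ lam * infDist y X ≤ infDist (f y) X} :=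
  (hasBasis_nhdsSet_thickening hX).mem_iff.1 <| eventually_nhdsSet_iff_forall.2 fun _ hx₀ =>
    eventually_mul_infDist_le_infDist_image hV hfV hXV hfX hopenX hlam hη hexp hx₀

end Expanding

theorem mem_of_forall_iterate_mem_thickening {M : Type*} [MetricSpace M] {f : M → M}
    {X : Set M} (hX : IsClosed X) {lam t : ℝ} (hlam : 1 < lam)
    (hgrow : ∀ y ∈ thickening t X, lam * infDist y X ≤ infDist (f y) X) {x : M}
    (hx : ∀ n, f^[n] x ∈ thickening t X) : x ∈ X := by
  obtain ⟨z, hz, -⟩ := mem_thickening_iff.1 (hx 0)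
  have hbdd : BddAbove (range fun n => infDist (f^[n] x) X) :=
    ⟨t, forall_mem_range.2 fun n => ((mem_thickening_iff_infDist_lt ⟨z, hz⟩).1 (hx n)).le⟩
  have hzero := nonpos_of_mul_le_succ_of_bddAbove hlam
    (fun n => by simpa only [Function.iterate_succ_apply'] using hgrow _ (hx n)) hbdd
  exact (hX.mem_iff_infDist_zero ⟨z, hz⟩).2 (le_antisymm hzero infDist_nonneg)

theorem stmt_16_general {M : Type*} [MetricSpace M] (U : Set M)
    (f : M → M) (hf : ContinuousOn f U)
    (X : Set M) (hX : IsCompact X) (hfX : Set.MapsTo f X X)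
    (V : Set M) (hV : IsOpen V) (hXV : X ⊆ V) (hVU : V ⊆ U)
    (lam η : ℝ) (hlam : 1 < lam) (hη : 0 < η)
    (hexp : ∀ x ∈ V, ∀ y ∈ V, dist x y ≤ η → lam * dist x y ≤ dist (f x) (f y))
    (hopenX : IsOpenMap (hfX.restrict f X X)) :
    IsRepeller f U X := by
  obtain ⟨t, ht, hthick⟩ := hX.exists_thickening_subset_mul_infDist_le hV (hf.mono hVU) hXV
    hfX hopenX (zero_le_one.trans hlam.le) hη hexp
  refine ⟨thickening t X, isOpen_thickening, self_subset_thickening ht X,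
    fun y hy => hVU (hthick hy).1, Subset.antisymm ?_ ?_⟩
  · exact fun x hx n => self_subset_thickening ht X (hfX.iterate n hx)
  · exact fun x hx => mem_of_forall_iterate_mem_thickening hX.isClosed hlam
      (fun y hy => (hthick hy).2) hx

/-- Let `(M,d)` be a metric space, `U ⊆ M` open, `f : U → M` continuous, and `X ⊆ U`
compact with `f(X) ⊆ X`. Suppose `f` is distance expanding on an open neighborhood
`V` of `X` (with constants `λ > 1`, `η > 0`) and the restriction `f|_X : X → X` is
an open map in the subspace topology. Then `X` is a repeller for `f`. -/
theorem stmt_16 {M : Type*} [MetricSpace M] (U : Set M) (hU : IsOpen U)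
    (f : M → M) (hf : ContinuousOn f U)
    (X : Set M) (hXU : X ⊆ U) (hX : IsCompact X) (hfX : Set.MapsTo f X X)
    (V : Set M) (hV : IsOpen V) (hXV : X ⊆ V) (hVU : V ⊆ U)
    (lam η : ℝ) (hlam : 1 < lam) (hη : 0 < η)
    (hexp : ∀ x ∈ V, ∀ y ∈ V, dist x y ≤ η → lam * dist x y ≤ dist (f x) (f y))
    (hopenX : IsOpenMap (hfX.restrict f X X)) :
    IsRepeller f U X :=
  stmt_16_general U f hf X hX hfX V hV hXV hVU lam η hlam hη hexp hopenX
end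

section
/- Let U ⊆ ℂ be open and let h : U → ℂ be an injective continuous map. Let K ≥ 1 and suppose K⁻¹·|a − b| ≤ |h(a) − h(b)| ≤ K·|a − b| for all a, b ∈ U (h is K-biLipschitz). Then for every x ∈ U and r > 0 such that the closed disk D̄(x,r) is contained in U, one has D(h(x), r/K) ⊆ h(D(x,r)) ⊆ D(h(x), K·r). -/
/-!
If `y ∉ h '' closedBall c R`, the loop `t ↦ h (circleMap c R t) - y` is null-homotopic in `ℂ \ {0}`:
shrink the circle to its centre. The loop `t ↦ h (circleMap c R t) - h c` is not: moving the
antipodal point to the centre deforms it, through nonvanishing loops by injectivity, into the odd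
loop `t ↦ h (circleMap c R t) - h (circleMap c R (t + π))`, and an odd loop winds an odd number of
times. The winding number around `y` does not change while `y` moves without meeting the loop, so
every `y` closer to `h c` than the image of the boundary circle lies in `h '' closedBall c R`, hence
in `h '' ball c R`. A `K`-biLipschitz `h` maps the circle of radius `r` around `x` at distance at
least `r / K` from `h x`.
-/

open Metric Set Function Complex unitInterval
open scoped Real

/-- A `2π`-periodic loop has winding number zero around `0` exactly when it has a continuous
`2π`-periodic logarithm. -/
def HasPeriodicLog (g : ℝ → ℂ) : Prop :=
  ∃ φ : ℝ → ℂ, Continuous φ ∧ Periodic φ (2 * π) ∧ ∀ t, exp (φ t) = g t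

theorem hasPeriodicLog_const {c : ℂ} (hc : c ≠ 0) : HasPeriodicLog fun _ ↦ c :=
  ⟨fun _ ↦ log c, continuous_const, fun _ ↦ rfl, fun _ ↦ exp_log hc⟩

theorem HasPeriodicLog.of_homotopy {H : I → ℝ → ℂ} (hH : Continuous (uncurry H))
    (hne : ∀ s t, H s t ≠ 0) (hper : ∀ s, Periodic (H s) (2 * π))
    (h₀ : HasPeriodicLog (H 0)) : HasPeriodicLog (H 1) := by
  obtain ⟨φ, hφc, hφper, hφ⟩ := h₀
  let H' : C(I × ℝ, {z : ℂ // z ≠ 0}) := ⟨fun p ↦ ⟨H p.1 p.2, hne _ _⟩, hH.subtype_mk _⟩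
  have H'_0 (t : ℝ) : H' (0, t) = ⟨exp (φ t), exp_ne_zero _⟩ := Subtype.ext (hφ t).symm
  set Φ := isCoveringMap_exp.liftHomotopy H' ⟨φ, hφc⟩ H'_0
  have hΦ := isCoveringMap_exp.liftHomotopy_lifts H' ⟨φ, hφc⟩ H'_0
  -- `Φ` and its translate by `2π` lift the same homotopy from the same initial map.
  let Φ' : C(I × ℝ, ℂ) := ⟨fun p ↦ Φ (p.1, p.2 + 2 * π), by fun_prop⟩
  have hΦ' : Φ' = Φ := by
    refine (isCoveringMap_exp.eq_liftHomotopy_iff' H'_0 Φ').2 ⟨?_, fun t ↦ ?_⟩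
    · ext p : 2
      exact (congrArg Subtype.val (congrFun hΦ (p.1, p.2 + 2 * π))).trans (hper p.1 p.2)
    · exact (isCoveringMap_exp.liftHomotopy_zero H' _ H'_0 _).trans (hφper t)
  refine ⟨fun t ↦ Φ (1, t), by fun_prop, fun t ↦ DFunLike.congr_fun hΦ' (1, t), fun t ↦ ?_⟩
  exact congrArg Subtype.val (congrFun hΦ (1, t))

theorem HasPeriodicLog.sub_of_norm_sub_lt {Γ : ℝ → ℂ} {y z : ℂ} (hΓ : Continuous Γ)
    (hper : Periodic Γ (2 * π)) (hyz : ∀ t, ‖y - z‖ < ‖Γ t - z‖)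
    (hy : HasPeriodicLog fun t ↦ Γ t - y) : HasPeriodicLog fun t ↦ Γ t - z := by
  let H : I → ℝ → ℂ := fun s t ↦ Γ t - (y + s * (z - y))
  have hne (s : I) (t : ℝ) : H s t ≠ 0 := by
    have hs : ‖(1 - s : ℂ) * (y - z)‖ ≤ ‖y - z‖ := by
      rw [norm_mul]
      exact mul_le_of_le_one_left (norm_nonneg _) (by
        rw [← ofReal_one, ← ofReal_sub, norm_real, Real.norm_of_nonneg (by simp [s.2.2])]
        linarith [s.2.1])
    rw [← norm_pos_iff]
    calc 0 < ‖Γ t - z‖ - ‖(1 - s : ℂ) * (y - z)‖ := by linarith [hyz t]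
      _ ≤ ‖H s t‖ := by
        rw [show H s t = (Γ t - z) - (1 - s) * (y - z) by simp only [H]; ring]
        exact norm_sub_norm_le _ _
  have h₀ : HasPeriodicLog (H 0) := by simpa [H] using hy
  simpa [H] using h₀.of_homotopy (by fun_prop) hne fun s t ↦ by simp [H, hper t]

theorem not_hasPeriodicLog_of_antiperiodic {g : ℝ → ℂ} (hg : Antiperiodic g π) :
    ¬HasPeriodicLog g := by
  rintro ⟨φ, hφc, hφper, hφ⟩
  -- `φ (t + π) - φ t` is a continuous logarithm of `-1`, hence a constant `(2n + 1)πi`.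
  have hjump (t : ℝ) : exp (φ (t + π) - φ t) = exp (π * Complex.I) := by
    rw [exp_sub, hφ, hφ, hg, exp_pi_mul_I, neg_div_self (hφ t ▸ exp_ne_zero _)]
  have hconst (t : ℝ) : φ (t + π) - φ t = φ π - φ 0 := by
    simpa using isCoveringMap_exp.const_of_comp (g := fun t ↦ φ (t + π) - φ t) (by fun_prop)
      (fun t t' ↦ Subtype.ext (by simp only [hjump])) t 0
  obtain ⟨n, hn⟩ := exp_eq_exp_iff_exists_int.1 (hjump 0)
  rw [zero_add] at hn
  have h2π : φ (2 * π) - φ 0 = (2 * n + 1 : ℤ) * (2 * π * Complex.I) := by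
    have := hconst π
    rw [show π + π = 2 * π by ring] at this
    push_cast
    linear_combination this + 2 * hn
  rw [hφper.eq, sub_self, eq_comm, mul_eq_zero] at h2π
  rcases h2π with h | h
  · norm_cast at h; omega
  · simp [Real.pi_ne_zero, Complex.I_ne_zero] at h

section Disk

variable {h : ℂ → ℂ} {c : ℂ} {R : ℝ}

theorem circleMap_mul_radius_mem_closedBall (hR : 0 ≤ R) (s : I) (t : ℝ) :
    circleMap c (s * R) t ∈ closedBall c R := by
  rw [mem_closedBall, dist_eq_norm, circleMap_sub_center, norm_circleMap_zero,
    abs_of_nonneg (mul_nonneg s.2.1 hR)]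
  exact mul_le_of_le_one_left hR s.2.2

theorem hasPeriodicLog_circleMap_sub_of_notMem_image (hR : 0 ≤ R)
    (hh : ContinuousOn h (closedBall c R)) {y : ℂ} (hy : y ∉ h '' closedBall c R) :
    HasPeriodicLog fun t ↦ h (circleMap c R t) - y := by
  let H : I → ℝ → ℂ := fun s t ↦ h (circleMap c (s * R) t) - y
  have hne (s : I) (t : ℝ) : H s t ≠ 0 :=
    sub_ne_zero.2 fun hs ↦ hy ⟨_, circleMap_mul_radius_mem_closedBall hR s t, hs⟩
  have hH : Continuous (uncurry H) := by
    have hcirc : Continuous fun p : I × ℝ ↦ circleMap c (p.1 * R) p.2 := by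
      unfold circleMap; fun_prop
    exact (hh.comp_continuous hcirc fun p ↦
      circleMap_mul_radius_mem_closedBall hR p.1 p.2).sub continuous_const
  have h₀ : HasPeriodicLog (H 0) := by
    simpa [H, circleMap_zero_radius] using hasPeriodicLog_const (hne 0 0)
  simpa [H] using h₀.of_homotopy hH hne fun s t ↦ by simp [H, (periodic_circleMap _ _) t]

theorem not_hasPeriodicLog_circleMap_sub_center (hR : 0 < R)
    (hh : ContinuousOn h (closedBall c R)) (hinj : InjOn h (closedBall c R)) :
    ¬HasPeriodicLog fun t ↦ h (circleMap c R t) - h c := by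
  let H : I → ℝ → ℂ := fun s t ↦ h (circleMap c R t) - h (circleMap c (s * R) (t + π))
  have hne (s : I) (t : ℝ) : H s t ≠ 0 := by
    refine sub_ne_zero.2 fun hs ↦ ?_
    have := hinj (circleMap_mem_closedBall c hR.le t)
      (circleMap_mul_radius_mem_closedBall hR.le s (t + π)) hs
    rw [← circleMap_neg_radius] at this
    have hR' : (R : ℂ) = (-(s * R) : ℝ) := mul_right_cancel₀ (exp_ne_zero _) (add_left_cancel this)
    nlinarith [s.2.1, (ofReal_inj.1 hR')]
  have hH : Continuous (uncurry H) := by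
    have h₁ : Continuous fun p : I × ℝ ↦ circleMap c R p.2 := by fun_prop
    have h₂ : Continuous fun p : I × ℝ ↦ circleMap c (p.1 * R) (p.2 + π) := by
      unfold circleMap; fun_prop
    exact (hh.comp_continuous h₁ fun p ↦ circleMap_mem_closedBall c hR.le p.2).sub
      (hh.comp_continuous h₂ fun p ↦ circleMap_mul_radius_mem_closedBall hR.le p.1 (p.2 + π))
  have hanti : Antiperiodic (H 1) π := fun t ↦ by
    simp only [H, Set.Icc.coe_one, one_mul, add_assoc, ← two_mul, (periodic_circleMap _ _) t]
    ring
  intro hlog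
  have h₀ : HasPeriodicLog (H 0) := by simpa [H, circleMap_zero_radius] using hlog
  have hper (s : I) : Periodic (H s) (2 * π) := fun t ↦ by
    simp only [H, add_right_comm t, periodic_circleMap _ _ _]
  exact not_hasPeriodicLog_of_antiperiodic hanti (h₀.of_homotopy hH hne hper)

theorem ball_subset_image_ball (hR : 0 < R) (hh : ContinuousOn h (closedBall c R))
    (hinj : InjOn h (closedBall c R)) {ρ : ℝ} (hρ : ∀ z ∈ sphere c R, ρ ≤ ‖h z - h c‖) :
    ball (h c) ρ ⊆ h '' ball c R := by
  intro y hy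
  rw [mem_ball, dist_eq_norm] at hy
  have hρ' (t : ℝ) : ρ ≤ ‖h (circleMap c R t) - h c‖ := hρ _ (circleMap_mem_sphere c hR.le t)
  obtain ⟨a, ha, rfl⟩ : y ∈ h '' closedBall c R := by
    by_contra hy'
    refine not_hasPeriodicLog_circleMap_sub_center hR hh hinj
      ((hasPeriodicLog_circleMap_sub_of_notMem_image hR.le hh hy').sub_of_norm_sub_lt
        (hh.comp_continuous (by fun_prop) fun t ↦ circleMap_mem_closedBall c hR.le t)
        (fun t ↦ by simp only [periodic_circleMap _ _ t])
        fun t ↦ hy.trans_le (hρ' t))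
  refine ⟨a, ?_, rfl⟩
  rcases (mem_closedBall.1 ha).lt_or_eq with ha | ha
  · exact ha
  · exact absurd (hρ a (mem_sphere.2 ha)) hy.not_ge

end Disk

theorem stmt_17_general (U : Set ℂ) (h : ℂ → ℂ)
    (hcont : ContinuousOn h U) (hinj : Set.InjOn h U)
    (K : ℝ) (hK : 1 ≤ K)
    (hbilip : ∀ a ∈ U, ∀ b ∈ U,
      K⁻¹ * ‖a - b‖ ≤ ‖h a - h b‖ ∧ ‖h a - h b‖ ≤ K * ‖a - b‖) :
    ∀ x ∈ U, ∀ r : ℝ, 0 < r → closedBall x r ⊆ U →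
      ball (h x) (r / K) ⊆ h '' ball x r ∧ h '' ball x r ⊆ ball (h x) (K * r) := by
  intro x hx r hr hxr
  refine ⟨ball_subset_image_ball hr (hcont.mono hxr) (hinj.mono hxr) fun z hz ↦ ?_, ?_⟩
  · rw [div_eq_inv_mul, ← mem_sphere_iff_norm.1 hz]
    exact (hbilip z (hxr (sphere_subset_closedBall hz)) x hx).1
  · rintro _ ⟨a, ha, rfl⟩
    rw [mem_ball, dist_eq_norm]
    calc ‖h a - h x‖ ≤ K * ‖a - x‖ := (hbilip a (hxr (ball_subset_closedBall ha)) x hx).2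
      _ < K * r := by gcongr; exact mem_ball_iff_norm.1 ha

/-- Let `U ⊆ ℂ` be open and `h : U → ℂ` injective continuous and `K`-biLipschitz
(`K ≥ 1`). Then for every `x ∈ U` and `r > 0` with the closed disk `D̄(x,r) ⊆ U`,
one has `D(h(x), r/K) ⊆ h(D(x,r)) ⊆ D(h(x), K·r)`. -/
theorem stmt_17 (U : Set ℂ) (hU : IsOpen U) (h : ℂ → ℂ)
    (hcont : ContinuousOn h U) (hinj : Set.InjOn h U)
    (K : ℝ) (hK : 1 ≤ K)
    (hbilip : ∀ a ∈ U, ∀ b ∈ U,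
      K⁻¹ * ‖a - b‖ ≤ ‖h a - h b‖ ∧ ‖h a - h b‖ ≤ K * ‖a - b‖) :
    ∀ x ∈ U, ∀ r : ℝ, 0 < r → closedBall x r ⊆ U →
      ball (h x) (r / K) ⊆ h '' ball x r ∧ h '' ball x r ⊆ ball (h x) (K * r) :=
  stmt_17_general U h hcont hinj K hK hbilip
end
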